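/- arXiv:math/0510583 — 11 statements merged into one kernel-verified Lean document; each statement's English description precedes it below -/
import Mathlib

section
/- Let R be a commutative ring, M an R-module, and a : ℕ → M a sequence satisfying a linear recurrence relation of order d over R. If for some k ∈ ℕ and positive integer m we have a(k) = a(k+m) = a(k+2m) = ... = a(k+(d-1)m) = 0, then a(k+im) = 0 for all i ∈ ℕ. -/
section Aux

variable {R M : Type} [CommRing R] [AddCommGroup M] [Module R M] {d : ℕ}

/-- Action of a square matrix over `R` on a vector of elements of the module `M`. -/
def matAct (B : Matrix (Fin d) (Fin d) R) (v : Fin d → M) : Fin d → M :=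
  fun i => ∑ j, B i j • v j

lemma matAct_one (v : Fin d → M) : matAct (1 : Matrix (Fin d) (Fin d) R) v = v := by
  funext i
  simp [matAct, Matrix.one_apply, ite_smul]

lemma matAct_mul (A B : Matrix (Fin d) (Fin d) R) (v : Fin d → M) :
    matAct (A * B) v = matAct A (matAct B v) := by
  funext i
  simp only [matAct, Matrix.mul_apply, Finset.sum_smul, Finset.smul_sum, smul_smul]
  exact Finset.sum_comm

lemma matAct_smul (r : R) (A : Matrix (Fin d) (Fin d) R) (v : Fin d → M) :
    matAct (r • A) v = r • matAct A v := by
  funext i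
  simp [matAct, Finset.smul_sum, mul_smul]

lemma matAct_sum {ι : Type*} (s : Finset ι) (f : ι → Matrix (Fin d) (Fin d) R) (v : Fin d → M) :
    matAct (∑ t ∈ s, f t) v = ∑ t ∈ s, matAct (f t) v := by
  funext i
  simp only [matAct, Finset.sum_apply, Matrix.sum_apply, Finset.sum_smul]
  exact Finset.sum_comm

end Aux

/-- If `a` satisfies an `R`-recurrence of order `d` and vanishes at `d` consecutive
terms of an arithmetic progression `k, k+m, ..., k+(d-1)m`, then it vanishes on the
whole infinite arithmetic progression. -/
theorem zero_on_progression_of_d_zeroes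
    (R M : Type) [CommRing R] [AddCommGroup M] [Module R M]
    (a : ℕ → M) (d : ℕ) (γ : Fin d → R)
    (ha : ∀ n : ℕ, a (n + d) = ∑ i : Fin d, γ i • a (n + i.val))
    (k m : ℕ) (hm : 0 < m)
    (hz : ∀ i < d, a (k + i * m) = 0) :
    ∀ i : ℕ, a (k + i * m) = 0 := by
  -- trivial case `d = 0`: the sequence is identically zero
  rcases Nat.eq_zero_or_pos d with rfl | hd
  · intro i
    have := ha (k + i * m)
    simpa using this
  -- trivial case `R` subsingleton: then `M` is subsingleton
  rcases subsingleton_or_nontrivial R with hR | hR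
  · haveI := Module.subsingleton R M
    intro i
    exact Subsingleton.elim _ _
  -- companion matrix
  set C : Matrix (Fin d) (Fin d) R :=
    fun i j => if (i : ℕ) + 1 = d then γ j else if (j : ℕ) = (i : ℕ) + 1 then 1 else 0 with hC
  -- one step of the recurrence as a matrix action
  have hstep : ∀ n : ℕ, matAct C (fun j : Fin d => a (n + j)) = fun j : Fin d => a (n + 1 + j) := by
    intro n
    funext i
    by_cases h : (i : ℕ) + 1 = d
    · have h1 : n + 1 + (i : ℕ) = n + d := by omega
      simp only [matAct, hC, h, if_true]
      rw [h1, ha n]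
    · have hi : (i : ℕ) + 1 < d := lt_of_le_of_ne i.isLt h
      have h2 : ∀ j : Fin d, ((j : ℕ) = (i : ℕ) + 1) = (j = ⟨(i : ℕ) + 1, hi⟩) := by
        intro j; simp [Fin.ext_iff]
      simp only [matAct, hC, h, if_false, h2, ite_smul, one_smul, zero_smul]
      rw [Finset.sum_ite_eq' Finset.univ (⟨(i : ℕ) + 1, hi⟩ : Fin d)]
      simp only [Finset.mem_univ, if_true]
      congr 1
      omega
  -- iterated action
  have hpow : ∀ (t n : ℕ), matAct (C ^ t) (fun j : Fin d => a (n + j)) =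
      fun j : Fin d => a (n + t + j) := by
    intro t
    induction t with
    | zero => intro n; simp [matAct_one]
    | succ t ih =>
      intro n
      have : C ^ (t + 1) = C ^ t * C := pow_succ C t
      rw [this, matAct_mul, hstep n, ih (n + 1)]
      funext j
      congr 2
      omega
  -- Cayley–Hamilton for `B = C ^ m`
  set B : Matrix (Fin d) (Fin d) R := C ^ m with hB
  set p : Polynomial R := B.charpoly with hp
  have hmonic : p.Monic := B.charpoly_monic
  have hdeg : p.natDegree = d := by
    rw [hp, Matrix.charpoly_natDegree_eq_dim, Fintype.card_fin]
  have hCH : (Polynomial.aeval B) p = 0 := Matrix.aeval_self_charpoly B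
  have hsum : ∑ t ∈ Finset.range (d + 1), p.coeff t • B ^ t = 0 := by
    have h0 := Polynomial.aeval_eq_sum_range (p := p) B
    rw [hCH, hdeg] at h0
    exact h0.symm
  have hcd : p.coeff d = 1 := by
    have := hmonic.leadingCoeff
    rwa [Polynomial.leadingCoeff, hdeg] at this
  have hBd : B ^ d = ∑ j : Fin d, (-(p.coeff j)) • B ^ (j : ℕ) := by
    rw [Finset.sum_range_succ, hcd, one_smul] at hsum
    have : B ^ d = -∑ t ∈ Finset.range d, p.coeff t • B ^ t := by
      linear_combination (norm := abel) hsum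
    rw [this, ← Finset.sum_neg_distrib, Fin.sum_univ_eq_sum_range (fun t => (-(p.coeff t)) • B ^ t)]
    congr 1
    funext t
    rw [neg_smul]
  -- the subsequence recurrence
  have hrec : ∀ i : ℕ, a (k + (i + d) * m) =
      ∑ j : Fin d, (-(p.coeff j)) • a (k + (i + (j : ℕ)) * m) := by
    intro i
    have hact : ∀ t : ℕ, matAct (B ^ t) (fun j : Fin d => a (k + j)) =
        fun j : Fin d => a (k + t * m + j) := by
      intro t
      rw [hB, ← pow_mul, mul_comm m t, hpow (t * m) k]
    have e1 : B ^ (i + d) = B ^ d * B ^ i := by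
      rw [← pow_add]; ring_nf
    have e2 : matAct (B ^ (i + d)) (fun j : Fin d => a (k + j)) =
        matAct (B ^ d) (fun j : Fin d => a (k + i * m + j)) := by
      rw [e1, matAct_mul, hact i]
    have z : Fin d := ⟨0, hd⟩
    have e3 := congrFun e2 ⟨0, hd⟩
    rw [hact (i + d)] at e3
    simp only at e3
    rw [Nat.add_zero] at e3
    rw [e3, hBd, matAct_sum]
    rw [Finset.sum_apply]
    congr 1
    funext j
    rw [matAct_smul]
    have h4 : matAct (B ^ (j : ℕ)) (fun j' : Fin d => a (k + i * m + j')) =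
        fun j' : Fin d => a (k + i * m + (j : ℕ) * m + j') := by
      rw [hB, ← pow_mul, mul_comm m (j : ℕ), hpow ((j : ℕ) * m) (k + i * m)]
    rw [Pi.smul_apply, h4]
    congr 1
    ring
  -- strong induction
  intro i
  induction i using Nat.strong_induction_on with
  | _ i ih =>
    rcases lt_or_ge i d with h | h
    · exact hz i h
    · obtain ⟨t, rfl⟩ := Nat.exists_eq_add_of_le h
      rw [Nat.add_comm d t, hrec t]
      apply Finset.sum_eq_zero
      intro j _
      rw [ih (t + (j : ℕ)) (by omega)]
      simp
end

section
/- Let p be a prime. The zero set of the sequence a : ℕ → 𝔽_p(x) defined by a(n) = (x+1)^n - x^n - 1 is exactly the set of powers of p, i.e., {n ∈ ℕ : a(n) = 0} = {p^k : k ∈ ℕ}. -/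
open Polynomial in
lemma lech_poly_iff (p : ℕ) [Fact p.Prime] (n : ℕ) :
    ((X + 1 : (ZMod p)[X]) ^ n = X ^ n + 1) ↔ ∃ k : ℕ, n = p ^ k := by
  have hp : p.Prime := Fact.out
  constructor
  · intro h
    rcases Nat.eq_zero_or_pos n with rfl | hn
    · simp only [pow_zero] at h
      exact absurd (left_eq_add.mp h) one_ne_zero
    set k := n.factorization p with hk
    set m := n / p ^ k with hm
    have hnm : p ^ k * m = n := Nat.ordProj_mul_ordCompl_eq_self n p
    have hpm : ¬ p ∣ m := Nat.not_dvd_ordCompl hp hn.ne'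
    have hm1 : 1 ≤ m := by
      rcases Nat.eq_zero_or_pos m with h0 | h1
      · rw [h0, mul_zero] at hnm; omega
      · exact h1
    have e1 : ((X : (ZMod p)[X]) ^ p ^ k + 1) ^ m = (X + 1) ^ n := by
      rw [← hnm, pow_mul, add_pow_char_pow, one_pow]
    have e2 : (((X : (ZMod p)[X]) ^ p ^ k) ^ m) + 1 = X ^ n + 1 := by
      rw [← hnm, pow_mul]
    have key : (expand (ZMod p) (p ^ k)) ((X + 1) ^ m) =
        (expand (ZMod p) (p ^ k)) (X ^ m + 1) := by
      rw [map_pow, map_add, map_one, map_add, map_pow, map_one, expand_X, e1, e2, h]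
    have h2 : (X + 1 : (ZMod p)[X]) ^ m = X ^ m + 1 :=
      Polynomial.expand_injective (pow_pos hp.pos k) key
    have hd := congrArg derivative h2
    simp only [derivative_pow, derivative_add, derivative_X, derivative_one, add_zero,
      mul_one] at hd
    have hmc : (C (m : ZMod p)) ≠ 0 := by
      simp only [ne_eq, C_eq_zero]
      exact fun h0 => hpm ((ZMod.natCast_eq_zero_iff m p).mp h0)
    have hd2 : (X + 1 : (ZMod p)[X]) ^ (m - 1) = X ^ (m - 1) :=
      mul_left_cancel₀ hmc hd
    have hm' : m = (m - 1) + 1 := by omega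
    have h3 : (X : (ZMod p)[X]) ^ m + 1 = X ^ m + X ^ (m - 1) := by
      calc (X : (ZMod p)[X]) ^ m + 1 = (X + 1) ^ m := h2.symm
        _ = (X + 1) * (X + 1) ^ (m - 1) := by nth_rewrite 1 [hm']; rw [pow_succ']
        _ = (X + 1) * X ^ (m - 1) := by rw [hd2]
        _ = X ^ m + X ^ (m - 1) := by
            rw [add_mul, one_mul, ← pow_succ', ← hm']
    have h4 : (1 : (ZMod p)[X]) = X ^ (m - 1) := add_left_cancel h3
    have h5 : m - 1 = 0 := by
      have := congrArg natDegree h4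
      simpa using this.symm
    have hm2 : m = 1 := by omega
    rw [hm2, mul_one] at hnm
    exact ⟨k, hnm.symm⟩
  · rintro ⟨k, rfl⟩
    rw [add_pow_char_pow, one_pow]

/-- The zero set of the sequence `a n = (x+1)^n - x^n - 1` in `𝔽_p(x)` is exactly
the set of powers of `p`. -/
theorem lech_zero_set (p : ℕ) [Fact p.Prime] :
    {n : ℕ | ((RatFunc.X + 1) ^ n - RatFunc.X ^ n - 1 : RatFunc (ZMod p)) = 0} =
      {n : ℕ | ∃ k : ℕ, n = p ^ k} := by
  ext n
  simp only [Set.mem_setOf_eq]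
  rw [sub_sub, sub_eq_zero, ← lech_poly_iff p n,
    ← (RatFunc.algebraMap_injective (ZMod p)).eq_iff]
  simp [map_add, map_pow, map_one, RatFunc.algebraMap_X]
end

section
/- Let p be a prime and a : ℕ → 𝔽_p(x,y,z) the sequence a(n) = (x+y+z)^n - (x+y)^n - (x+z)^n - (y+z)^n + x^n + y^n + z^n. Then {n ∈ ℕ : a(n) = 0} = {p^k : k ∈ ℕ} ∪ {p^k + p^m : k, m ∈ ℕ}. -/
open MvPolynomial Finset

lemma lucas_aux (p : ℕ) [Fact p.Prime] : ∀ (e u : ℕ), ¬ p ∣ u → ¬ p ∣ Nat.choose (p ^ e * u) (p ^ e)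
  | 0, u, hu => by simpa using hu
  | e + 1, u, hu => by
    intro hdvd
    have hp : 0 < p := (Fact.out : p.Prime).pos
    have key : Nat.choose (p ^ (e+1) * u) (p ^ (e+1)) ≡
        Nat.choose ((p ^ (e+1) * u) % p) ((p ^ (e+1)) % p) *
          Nat.choose ((p ^ (e+1) * u) / p) ((p ^ (e+1)) / p) [MOD p] :=
      Choose.choose_modEq_choose_mod_mul_choose_div_nat
    rw [pow_succ', mul_assoc] at hdvd
    rw [pow_succ', mul_assoc, Nat.mul_mod_right, Nat.mul_mod_right,
      Nat.mul_div_cancel_left _ hp, Nat.mul_div_cancel_left _ hp,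
      Nat.choose_zero_right, one_mul] at key
    exact lucas_aux p e u hu
      ((Nat.modEq_zero_iff_dvd).mp ((key.symm.trans (Nat.modEq_zero_iff_dvd.mpr hdvd)).symm).symm)

open MvPolynomial Finset

lemma coeff_aux (p : ℕ) [Fact p.Prime] (m j : ℕ) (hj : j ≤ m) :
    MvPolynomial.coeff (Finsupp.single (1 : Fin 3) j + Finsupp.single 2 (m - j))
      ((X 1 + X 2 : MvPolynomial (Fin 3) (ZMod p)) ^ m) = (Nat.choose m j : ZMod p) := by
  rw [add_pow, MvPolynomial.coeff_sum]
  have hterm : ∀ i, (X 1 : MvPolynomial (Fin 3) (ZMod p)) ^ i * X 2 ^ (m - i) * (Nat.choose m i : MvPolynomial (Fin 3) (ZMod p)) =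
      monomial (Finsupp.single (1 : Fin 3) i + Finsupp.single 2 (m - i)) ((Nat.choose m i : ZMod p)) := by
    intro i
    rw [X_pow_eq_monomial, X_pow_eq_monomial, monomial_mul, mul_one,
      ← map_natCast (C : ZMod p →+* MvPolynomial (Fin 3) (ZMod p)), mul_comm, C_mul_monomial, mul_one]
  simp only [hterm, coeff_monomial]
  rw [Finset.sum_eq_single j]
  · rw [if_pos rfl]
  · intro b _ hbj
    rw [if_neg]
    intro hEq
    exact hbj (by simpa [Finsupp.single_apply] using DFunLike.congr_fun hEq 1)
  · intro hj'
    exact absurd (Finset.mem_range.mpr (Nat.lt_succ_of_le hj)) hj'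

lemma freshman_char (p : ℕ) [Fact p.Prime] {m : ℕ} (hm : 0 < m)
    (h : (X 1 + X 2 : MvPolynomial (Fin 3) (ZMod p)) ^ m = X 1 ^ m + X 2 ^ m) :
    ∃ k, m = p ^ k := by
  have hp : p.Prime := Fact.out
  refine ⟨m.factorization p, ?_⟩
  set e := m.factorization p with he
  clear_value e
  obtain ⟨u, hpu, hof⟩ : ∃ u, ¬ p ∣ u ∧ p ^ e * u = m := by
    rw [he]
    exact ⟨m / p ^ m.factorization p, Nat.not_dvd_ordCompl hp hm.ne',
      Nat.ordProj_mul_ordCompl_eq_self m p⟩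
  have hu1 : u ≠ 0 := by rintro h0; rw [h0, mul_zero] at hof; omega
  rcases Nat.lt_or_ge u 2 with h2 | h2
  · have : u = 1 := by omega
    rw [this, mul_one] at hof; omega
  · exfalso
    have hpe : 0 < p ^ e := pow_pos hp.pos e
    have hjm : p ^ e < m := by rw [← hof]; nlinarith
    have hcoeff := congrArg
      (MvPolynomial.coeff (Finsupp.single (1 : Fin 3) (p ^ e) + Finsupp.single 2 (m - p ^ e))) h
    rw [coeff_aux p m (p ^ e) hjm.le] at hcoeff
    rw [MvPolynomial.coeff_add, X_pow_eq_monomial, X_pow_eq_monomial, coeff_monomial,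
      coeff_monomial, if_neg, if_neg, add_zero] at hcoeff
    · have hnd : ¬ p ∣ Nat.choose m (p ^ e) := by
        rw [← hof]
        exact lucas_aux p e u hpu
      rw [ZMod.natCast_eq_zero_iff] at hcoeff
      exact hnd hcoeff
    · intro hEq
      have := DFunLike.congr_fun hEq 1
      simp [Finsupp.single_apply] at this
      omega
    · intro hEq
      have := DFunLike.congr_fun hEq 2
      simp [Finsupp.single_apply] at this
      omega

noncomputable def derksenA (p : ℕ) (n : ℕ) : MvPolynomial (Fin 3) (ZMod p) :=
  (X 0 + X 1 + X 2) ^ n - (X 0 + X 1) ^ n - (X 0 + X 2) ^ n - (X 1 + X 2) ^ n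
    + X 0 ^ n + X 1 ^ n + X 2 ^ n

lemma derksen_hard (p : ℕ) [Fact p.Prime] (n : ℕ) (h : derksenA p n = 0) :
    (∃ k, n = p ^ k) ∨ ∃ k m, n = p ^ k + p ^ m := by
  have hp : p.Prime := Fact.out
  induction n using Nat.strong_induction_on with
  | _ n IH =>
  rcases Nat.eq_zero_or_pos n with rfl | hn
  · exfalso
    have h1 : (1 : MvPolynomial (Fin 3) (ZMod p)) = 0 := by
      rw [← h]; simp [derksenA]
    exact one_ne_zero h1
  by_cases hdvd : p ∣ n
  · obtain ⟨m, rfl⟩ := hdvd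
    have hm0 : m ≠ 0 := by rintro rfl; simp at hn
    have hfrob : frobenius (MvPolynomial (Fin 3) (ZMod p)) p (derksenA p m) = derksenA p (p * m) := by
      simp only [derksenA, map_add, map_sub, frobenius_def, ← pow_mul']
    rw [h] at hfrob
    rw [frobenius_def] at hfrob
    have hAm : derksenA p m = 0 := by
      exact pow_eq_zero_iff hp.pos.ne' |>.mp hfrob
    have hmlt : m < p * m := by
      have := hp.two_le
      nlinarith [Nat.pos_of_ne_zero hm0]
    rcases IH m hmlt hAm with ⟨k, rfl⟩ | ⟨k, l, rfl⟩
    · exact Or.inl ⟨k + 1, by rw [pow_succ']⟩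
    · exact Or.inr ⟨k + 1, l + 1, by rw [mul_add, pow_succ', pow_succ']⟩
  · rcases Nat.lt_or_ge n 2 with h1 | h1
    · exact Or.inl ⟨0, by rw [pow_zero]; omega⟩
    · have hm0 : n - 1 ≠ 0 := by omega
      have hder := congrArg (pderiv (0 : Fin 3)) h
      simp only [derksenA, map_sub, map_add, pderiv_pow, pderiv_X_self,
        pderiv_X_of_ne (show (1 : Fin 3) ≠ 0 by decide),
        pderiv_X_of_ne (show (2 : Fin 3) ≠ 0 by decide),
        map_zero, add_zero, zero_add, mul_zero, mul_one] at hder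
      have hB : (n : MvPolynomial (Fin 3) (ZMod p)) *
          ((X 0 + X 1 + X 2) ^ (n - 1) - (X 0 + X 1) ^ (n - 1)
            - (X 0 + X 2) ^ (n - 1) + X 0 ^ (n - 1)) = 0 := by
        linear_combination hder
      have hn0 : (n : MvPolynomial (Fin 3) (ZMod p)) ≠ 0 := by
        rw [Ne, CharP.cast_eq_zero_iff _ p]
        exact hdvd
      have hB' := (mul_eq_zero.mp hB).resolve_left hn0
      have hEv := congrArg (aeval (fun i : Fin 3 => if i = 0 then 0 else X i) :
        MvPolynomial (Fin 3) (ZMod p) →ₐ[ZMod p] MvPolynomial (Fin 3) (ZMod p)) hB'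
      simp only [map_sub, map_add, map_pow, aeval_X, map_zero,
        if_neg (show (1 : Fin 3) ≠ 0 by decide), if_neg (show (2 : Fin 3) ≠ 0 by decide),
        reduceIte, zero_pow hm0, zero_add, add_zero] at hEv
      have hfr : (X 1 + X 2 : MvPolynomial (Fin 3) (ZMod p)) ^ (n - 1)
          = X 1 ^ (n - 1) + X 2 ^ (n - 1) := by
        linear_combination hEv
      obtain ⟨k, hk⟩ := freshman_char p (Nat.pos_of_ne_zero hm0) hfr
      exact Or.inr ⟨k, 0, by rw [pow_zero]; omega⟩

lemma derksen_easy_pow {F : Type*} [Field F] (p : ℕ) [Fact p.Prime] [CharP F p]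
    (x y z : F) (k : ℕ) :
    (x + y + z) ^ p ^ k - (x + y) ^ p ^ k - (x + z) ^ p ^ k - (y + z) ^ p ^ k
      + x ^ p ^ k + y ^ p ^ k + z ^ p ^ k = 0 := by
  simp only [add_pow_char_pow]
  ring

lemma derksen_easy_two {F : Type*} [Field F] (p : ℕ) [Fact p.Prime] [CharP F p]
    (x y z : F) (k m : ℕ) :
    (x + y + z) ^ (p ^ k + p ^ m) - (x + y) ^ (p ^ k + p ^ m) - (x + z) ^ (p ^ k + p ^ m)
      - (y + z) ^ (p ^ k + p ^ m) + x ^ (p ^ k + p ^ m) + y ^ (p ^ k + p ^ m)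
      + z ^ (p ^ k + p ^ m) = 0 := by
  simp only [pow_add, add_pow_char_pow]
  ring

/-- For `a n = (x+y+z)^n - (x+y)^n - (x+z)^n - (y+z)^n + x^n + y^n + z^n` in
`𝔽_p(x,y,z)`, the zero set is `{p^k} ∪ {p^k + p^m}`. -/
theorem derksen_example_zero_set (p : ℕ) [Fact p.Prime] :
    let F := FractionRing (MvPolynomial (Fin 3) (ZMod p))
    let x : F := algebraMap (MvPolynomial (Fin 3) (ZMod p)) F (MvPolynomial.X 0)
    let y : F := algebraMap (MvPolynomial (Fin 3) (ZMod p)) F (MvPolynomial.X 1)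
    let z : F := algebraMap (MvPolynomial (Fin 3) (ZMod p)) F (MvPolynomial.X 2)
    {n : ℕ | (x + y + z) ^ n - (x + y) ^ n - (x + z) ^ n - (y + z) ^ n
        + x ^ n + y ^ n + z ^ n = 0} =
      {n : ℕ | ∃ k : ℕ, n = p ^ k} ∪ {n : ℕ | ∃ k m : ℕ, n = p ^ k + p ^ m} := by
  intro F x y z
  have hinj := IsFractionRing.injective (MvPolynomial (Fin 3) (ZMod p)) F
  haveI : CharP F p := charP_of_injective_algebraMap hinj p
  ext n
  simp only [Set.mem_setOf_eq, Set.mem_union]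
  constructor
  · intro h
    have hmap : algebraMap (MvPolynomial (Fin 3) (ZMod p)) F (derksenA p n) = 0 := by
      simp only [derksenA, map_add, map_sub, map_pow]
      exact h
    have hA : derksenA p n = 0 := by
      apply hinj
      rw [hmap, map_zero]
    exact derksen_hard p n hA
  · rintro (⟨k, rfl⟩ | ⟨k, m, rfl⟩)
    · exact derksen_easy_pow p x y z k
    · exact derksen_easy_two p x y z k m
end

section
/- Let K be a field of characteristic p > 0, let q be a power of p, and let a(n) = Σ_{i=1}^d β_i α_i^n with α_i, β_i in an algebraic closure of K. Suppose c_0, c_1, ..., c_r ∈ ℤ are such that the element Σ_{i=1}^d (β_i α_i^{c_0}) ⊗ α_i^{c_1} ⊗ ... ⊗ α_i^{c_r} of the (r+1)-fold tensor power of K̄ over 𝔽_q vanishes. Then a(c_0 + c_1 q^{k_1} + ... + c_r q^{k_r}) = 0 for all k_1,...,k_r ∈ ℕ (whenever the argument is a nonnegative integer). -/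
/-!
Over `𝔽_q` the map `x ↦ x ^ q ^ m` is linear, so for each `k` the map
`x₀ ⊗ x₁ ⊗ ⋯ ⊗ x_r ↦ x₀ · x₁ ^ q ^ k₁ ⋯ x_r ^ q ^ k_r` is a well-defined linear map out of the
tensor power. Applied to the vanishing tensor it returns `Σ_i β_i α_i ^ N`.
-/

theorem FiniteField.frobeniusAlgHom_pow_apply (F A : Type*) [Field F] [Fintype F] [CommRing A]
    [Algebra F A] (m : ℕ) (x : A) :
    (frobeniusAlgHom F A ^ m) x = x ^ Fintype.card F ^ m := by
  rw [AlgHom.coe_pow, coe_frobeniusAlgHom, pow_iterate]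

theorem PiTensorProduct.sum_prod_map_eq_zero_of_sum_tprod_eq_zero {R A ι κ : Type*}
    [CommSemiring R] [CommSemiring A] [Algebra R A] [Fintype ι]
    (f : ι → A →ₗ[R] A) {s : Finset κ} {x : κ → ι → A}
    (h : ∑ i ∈ s, tprod R (x i) = 0) :
    ∑ i ∈ s, ∏ j, f j (x i j) = 0 := by
  simpa using congrArg (lift ((MultilinearMap.mkPiAlgebra R ι A).compLinearMap f)) h

theorem prod_zpow_eq_zpow_sum₀ {G ι : Type*} [CommGroupWithZero G] {a : G} (ha : a ≠ 0)
    (s : Finset ι) (f : ι → ℤ) :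
    ∏ j ∈ s, a ^ f j = a ^ ∑ j ∈ s, f j := by
  classical
  induction s using Finset.induction with
  | empty => simp
  | insert _ _ hj ih => rw [Finset.prod_insert hj, Finset.sum_insert hj, zpow_add₀ ha, ih]

theorem zpow_mul_prod_zpow_pow {G ι : Type*} [CommGroupWithZero G] [Fintype ι] {a : G}
    (ha : a ≠ 0) (c₀ : ℤ) (c : ι → ℤ) (n : ι → ℕ) :
    a ^ c₀ * ∏ j, (a ^ c j) ^ n j = a ^ (c₀ + ∑ j, c j * n j) := by
  simp only [← zpow_natCast, ← zpow_mul, prod_zpow_eq_zpow_sum₀ ha, zpow_add₀ ha]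

theorem zeroes_from_tensor_vanishing_general
    (K : Type) [Field K] (p : ℕ) [Fact p.Prime] (e : ℕ) (he : 0 < e)
    (q : ℕ) (hq : q = p ^ e)
    [Algebra (GaloisField p e) (AlgebraicClosure K)]
    (d r : ℕ)
    (α β : Fin d → AlgebraicClosure K) (hα : ∀ i, α i ≠ 0)
    (c : Fin (r + 1) → ℤ)
    (htensor :
      (∑ i : Fin d,
        PiTensorProduct.tprod (GaloisField p e)
          (fun j : Fin (r + 1) =>
            if j = 0 then β i * α i ^ c 0 else α i ^ c j) :
        PiTensorProduct (GaloisField p e) (fun _ : Fin (r + 1) => AlgebraicClosure K)) = 0) :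
    ∀ (k : Fin r → ℕ) (N : ℕ),
      (N : ℤ) = c 0 + ∑ j : Fin r, c j.succ * (q : ℤ) ^ k j →
      ∑ i : Fin d, β i * α i ^ N = 0 := by
  intro k N hN
  let _ : Fintype (GaloisField p e) := Fintype.ofFinite _
  have hcard : Fintype.card (GaloisField p e) = q := by
    rw [hq, Fintype.card_eq_nat_card, GaloisField.card p e he.ne']
  let f : Fin (r + 1) → AlgebraicClosure K →ₗ[GaloisField p e] AlgebraicClosure K :=
    Fin.cons LinearMap.id fun j => (FiniteField.frobeniusAlgHom _ _ ^ k j).toLinearMap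
  rw [← PiTensorProduct.sum_prod_map_eq_zero_of_sum_tprod_eq_zero f htensor]
  refine Finset.sum_congr rfl fun i _ => ?_
  have hpow := zpow_mul_prod_zpow_pow (hα i) (c 0) (fun j => c j.succ) (fun j => q ^ k j)
  push_cast at hpow
  rw [← zpow_natCast, hN, ← hpow, Fin.prod_univ_succ]
  simp only [f, Fin.cons_zero, Fin.cons_succ, LinearMap.id_apply, AlgHom.toLinearMap_apply,
    FiniteField.frobeniusAlgHom_pow_apply, hcard, if_pos, Fin.succ_ne_zero, if_false, mul_assoc]

/-- If the tensor `Σ_i (β_i α_i^{c_0}) ⊗ α_i^{c_1} ⊗ ... ⊗ α_i^{c_r}` vanishes in the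
`(r+1)`-fold tensor power of the algebraic closure of `K` over `𝔽_q` (`q = p^e`), then
`a(c_0 + c_1 q^{k_1} + ... + c_r q^{k_r}) = 0` for all `k_1,...,k_r ∈ ℕ` whenever this
argument is a nonnegative integer, where `a(n) = Σ_i β_i α_i^n`. -/
theorem zeroes_from_tensor_vanishing
    (K : Type) [Field K] (p : ℕ) [Fact p.Prime] [CharP K p] (e : ℕ) (he : 0 < e)
    (q : ℕ) (hq : q = p ^ e)
    [Algebra (GaloisField p e) (AlgebraicClosure K)]
    (d r : ℕ)
    (α β : Fin d → AlgebraicClosure K) (hα : ∀ i, α i ≠ 0)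
    (c : Fin (r + 1) → ℤ)
    (htensor :
      (∑ i : Fin d,
        PiTensorProduct.tprod (GaloisField p e)
          (fun j : Fin (r + 1) =>
            if j = 0 then β i * α i ^ c 0 else α i ^ c j) :
        PiTensorProduct (GaloisField p e) (fun _ : Fin (r + 1) => AlgebraicClosure K)) = 0) :
    ∀ (k : Fin r → ℕ) (N : ℕ),
      (N : ℤ) = c 0 + ∑ j : Fin r, c j.succ * (q : ℤ) ^ k j →
      ∑ i : Fin d, β i * α i ^ N = 0 :=
  zeroes_from_tensor_vanishing_general K p e he q hq d r α β hα c htensor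
end

section
/- Let K be a field of characteristic p > 0 with [K : K^p] finite, where K^p = {f^p : f ∈ K}. Let V ⊆ K be a finite-dimensional 𝔽_p-subspace. Fix a K^p-basis h_1,...,h_m of K and define 𝔽_p-linear maps π_i : K → K by f = Σ_i π_i(f)^p h_i. Then there exists a finite-dimensional 𝔽_p-subspace W ⊆ K with V ⊆ W and π_i(VW) ⊆ W for all i = 1,...,m, where VW denotes the span of products vw with v ∈ V, w ∈ W. -/
open Submodule Pointwise

/-- Free Frobenius splitting: let `K` be a field of characteristic `p > 0`, finitely
generated over `𝔽_p`, with `h₁,...,h_m` a basis of `K` over `K^p` and `π_i : K → K` the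
`𝔽_p`-linear maps given by `f = Σ_i π_i(f)^p h_i`. Then every finite-dimensional
`𝔽_p`-subspace `V ⊆ K` is contained in a finite-dimensional `𝔽_p`-subspace `W` with
`π_i(VW) ⊆ W` for all `i`. -/
theorem exists_frobenius_stable_subspace
    (K : Type) [Field K] (p : ℕ) [Fact p.Prime] [CharP K p] [Algebra (ZMod p) K]
    (hfg : ∃ s : Finset K, Subfield.closure (s : Set K) = ⊤)
    (m : ℕ) (h : Fin m → K) (π : Fin m → (K →ₗ[ZMod p] K))
    (hdecomp : ∀ f : K, f = ∑ i : Fin m, (π i f) ^ p * h i)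
    (hindep : ∀ c : Fin m → K, ∑ i : Fin m, (c i) ^ p * h i = 0 → ∀ i, c i = 0)
    (V : Submodule (ZMod p) K) (hV : FiniteDimensional (ZMod p) V) :
    ∃ W : Submodule (ZMod p) K, FiniteDimensional (ZMod p) W ∧ V ≤ W ∧
      ∀ i : Fin m, ∀ x ∈ V * W, π i x ∈ W := by
  classical
  obtain ⟨s, hs⟩ := hfg
  have hp : p.Prime := Fact.out
  have hp0 : 0 < p := hp.pos
  have hp2 : 2 ≤ p := hp.two_le
  -- Key identity : π i (u^p * x) = u * π i x
  have key : ∀ (u x : K) (i : Fin m), π i (u ^ p * x) = u * π i x := by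
    intro u x i
    have h0 : ∑ j : Fin m, (π j (u ^ p * x) - u * π j x) ^ p * h j = 0 := by
      have e1 := hdecomp (u ^ p * x)
      have e2 := hdecomp x
      have hterm : ∀ j : Fin m, (π j (u ^ p * x) - u * π j x) ^ p * h j
          = (π j (u ^ p * x)) ^ p * h j - u ^ p * ((π j x) ^ p * h j) := by
        intro j
        rw [sub_pow_char, sub_mul, mul_pow]
        ring
      rw [Finset.sum_congr rfl fun j _ => hterm j, Finset.sum_sub_distrib,
        ← Finset.mul_sum, ← e1, ← e2, sub_self]
    exact sub_eq_zero.mp (hindep _ h0 i)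
  set S : Finset K := insert (1 : K) s with hS
  set M : Submodule (ZMod p) K := span (ZMod p) (S : Set K) with hM
  have h1M : (1 : K) ∈ M := subset_span (by simp [hS])
  have h1M1 : (1 : K) ∈ M ^ 1 := by simpa using h1M
  have hMfg : ∀ n : ℕ, (M ^ n).FG := fun n => (fg_span S.finite_toSet).pow n
  have step : ∀ a : ℕ, M ^ a ≤ M ^ (a + 1) := by
    intro a x hx
    rw [pow_succ]
    simpa using mul_mem_mul hx h1M
  have mono : ∀ {a b : ℕ}, a ≤ b → M ^ a ≤ M ^ b := by
    intro a b hab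
    induction hab with
    | refl => exact le_rfl
    | step _ ih => exact ih.trans (step _)
  have mulmem : ∀ {a b : ℕ} {x y : K}, x ∈ M ^ a → y ∈ M ^ b → x * y ∈ M ^ (a + b) := by
    intro a b x y hx hy
    rw [pow_add]; exact mul_mem_mul hx hy
  have powmem : ∀ (x : K) (a k : ℕ), x ∈ M ^ a → x ^ k ∈ M ^ (a * k) := by
    intro x a k hx
    rw [pow_mul]; exact Submodule.pow_mem_pow _ hx k
  have prodpow : ∀ (t : Finset K), (t : Set K) ⊆ (S : Set K) → ∀ k : K → ℕ,
      (∏ x ∈ t, x ^ k x) ∈ M ^ (∑ x ∈ t, k x) := by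
    intro t
    induction t using Finset.induction_on with
    | empty =>
      intro _ k
      rw [Finset.prod_empty, Finset.sum_empty, pow_zero]
      exact Submodule.one_le.mp le_rfl
    | @insert a t ha ih =>
      intro hsub k
      rw [Finset.prod_insert ha, Finset.sum_insert ha]
      have haS : a ∈ M := subset_span (hsub (by simp))
      have htS : (t : Set K) ⊆ (S : Set K) := by
        intro x hx; exact hsub (by simp [hx])
      exact mulmem (Submodule.pow_mem_pow _ haS (k a)) (ih htS k)
  have hsumdiv : ∀ e : K → ℕ, (∑ x ∈ S, e x / p) ≤ (∑ x ∈ S, e x) / p := by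
    intro e
    rw [Nat.le_div_iff_mul_le hp0, Finset.sum_mul]
    exact Finset.sum_le_sum fun x _ => Nat.div_mul_le_self _ _
  set c0 : ℕ := S.card * (p - 1) with hc0
  set C : Submodule (ZMod p) K :=
    (Finset.univ : Finset (Fin m)).sup (fun i => (M ^ c0).map (π i)) with hC
  have hCmem : ∀ (i : Fin m) (y : K), y ∈ M ^ c0 → π i y ∈ C := by
    intro i y hy
    exact Finset.le_sup (f := fun i => (M ^ c0).map (π i)) (Finset.mem_univ i)
      (Submodule.mem_map_of_mem hy)
  have hCfg : C.FG :=
    Finset.sup_induction fg_bot (fun a ha b hb => ha.sup hb)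
      (fun i _ => (hMfg c0).map (π i))
  -- main structural lemma
  have B : ∀ (n : ℕ) (i : Fin m), ∀ x ∈ M ^ n, π i x ∈ M ^ (n / p) * C := by
    intro n i x hx
    have hx' : π i x ∈ (span (ZMod p) ((S : Set K) ^ n)).map (π i) := by
      refine Submodule.mem_map_of_mem ?_
      rwa [hM, Submodule.span_pow] at hx
    rw [Submodule.map_span] at hx'
    refine span_le.mpr ?_ hx'
    rintro _ ⟨μ, hμ, rfl⟩
    rw [SetLike.mem_coe]
    rw [Set.mem_pow] at hμ
    obtain ⟨f, hf⟩ := hμ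
    rw [List.prod_ofFn] at hf
    set g : Fin n → K := fun j => (f j : K) with hg
    have hgS : ∀ j, g j ∈ S := fun j => (f j).2
    set e : K → ℕ := fun b => (Finset.univ.filter fun j => g j = b).card with he
    have hμe : μ = ∏ b ∈ S, b ^ e b := by
      rw [← hf, ← Finset.prod_fiberwise_of_maps_to (fun j _ => hgS j) g]
      refine Finset.prod_congr rfl fun b _ => ?_
      rw [Finset.prod_congr rfl (fun j hj => (Finset.mem_filter.mp hj).2), Finset.prod_const]
    have hcard : ∑ b ∈ S, e b = n := by
      have := Finset.card_eq_sum_card_fiberwise (fun j (_ : j ∈ Finset.univ) => hgS j)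
      simpa using this.symm
    have hsplitμ : μ = (∏ b ∈ S, b ^ (e b / p)) ^ p * ∏ b ∈ S, b ^ (e b % p) := by
      rw [hμe, ← Finset.prod_pow, ← Finset.prod_mul_distrib]
      refine Finset.prod_congr rfl fun b _ => ?_
      rw [← pow_mul, ← pow_add, Nat.div_add_mod']
    rw [hsplitμ, key]
    refine Submodule.mul_mem_mul ?_ ?_
    · refine mono ?_ (prodpow S subset_rfl (fun b => e b / p))
      calc (∑ b ∈ S, e b / p) ≤ (∑ b ∈ S, e b) / p := hsumdiv e
        _ = n / p := by rw [hcard]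
    · refine hCmem i _ (mono ?_ (prodpow S subset_rfl (fun b => e b % p)))
      calc (∑ b ∈ S, e b % p) ≤ ∑ _b ∈ S, (p - 1) := by
            refine Finset.sum_le_sum fun b _ => ?_
            have := Nat.mod_lt (e b) hp0
            omega
        _ = c0 := by rw [Finset.sum_const, smul_eq_mul, hc0]
  -- every element of K is a "fraction" over the filtration
  have ratio : ∀ x : K, ∃ (b : K) (n : ℕ), b ≠ 0 ∧ b ∈ M ^ n ∧ b * x ∈ M ^ n := by
    let F : Subfield K :=
      { carrier := {x | ∃ (b : K) (n : ℕ), b ≠ 0 ∧ b ∈ M ^ n ∧ b * x ∈ M ^ n}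
        mul_mem' := by
          rintro a b ⟨b₁, n₁, hb₁0, hb₁, hba₁⟩ ⟨b₂, n₂, hb₂0, hb₂, hba₂⟩
          exact ⟨b₁ * b₂, n₁ + n₂, mul_ne_zero hb₁0 hb₂0, mulmem hb₁ hb₂,
            by rw [show b₁ * b₂ * (a * b) = (b₁ * a) * (b₂ * b) by ring]
               exact mulmem hba₁ hba₂⟩
        one_mem' := ⟨1, 1, one_ne_zero, h1M1, by simpa using h1M1⟩
        add_mem' := by
          rintro a b ⟨b₁, n₁, hb₁0, hb₁, hba₁⟩ ⟨b₂, n₂, hb₂0, hb₂, hba₂⟩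
          refine ⟨b₁ * b₂, n₁ + n₂, mul_ne_zero hb₁0 hb₂0, mulmem hb₁ hb₂, ?_⟩
          rw [show b₁ * b₂ * (a + b) = (b₁ * a) * b₂ + b₁ * (b₂ * b) by ring]
          exact add_mem (mulmem hba₁ hb₂) (mulmem hb₁ hba₂)
        zero_mem' := ⟨1, 1, one_ne_zero, h1M1, by rw [mul_zero]; exact zero_mem _⟩
        neg_mem' := by
          rintro a ⟨b₁, n₁, hb₁0, hb₁, hba₁⟩
          exact ⟨b₁, n₁, hb₁0, hb₁, by rw [mul_neg]; exact neg_mem hba₁⟩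
        inv_mem' := by
          rintro a ⟨b₁, n₁, hb₁0, hb₁, hba₁⟩
          by_cases ha : a = 0
          · exact ⟨1, 1, one_ne_zero, h1M1, by rw [ha, inv_zero, mul_zero]; exact zero_mem _⟩
          · exact ⟨b₁ * a, n₁, mul_ne_zero hb₁0 ha, hba₁,
              by rw [mul_assoc, mul_inv_cancel₀ ha, mul_one]; exact hb₁⟩ }
    intro x
    have hle : Subfield.closure (s : Set K) ≤ F := by
      refine Subfield.closure_le.mpr ?_
      intro y hy
      refine ⟨1, 1, one_ne_zero, h1M1, ?_⟩
      rw [one_mul]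
      simpa using subset_span (show y ∈ (S : Set K) by
        rw [hS]; push_cast; exact Set.mem_insert_iff.mpr (Or.inr hy))
    exact hle (by rw [hs]; exact Subfield.mem_top x)
  -- common denominators for finitely generated subspaces
  have denom : ∀ U : Submodule (ZMod p) K, U.FG →
      ∃ (b : K) (n : ℕ), b ≠ 0 ∧ b ∈ M ^ n ∧ ∀ u ∈ U, b * u ∈ M ^ n := by
    intro U hU
    obtain ⟨t, rfl⟩ := hU
    have main : ∀ t : Finset K, ∃ (b : K) (n : ℕ), b ≠ 0 ∧ b ∈ M ^ n ∧
        ∀ u ∈ t, b * u ∈ M ^ n := by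
      intro t
      induction t using Finset.induction_on with
      | empty => exact ⟨1, 1, one_ne_zero, h1M1, fun u hu => absurd hu (Finset.notMem_empty u)⟩
      | @insert a t ha ih =>
        obtain ⟨b₂, n₂, hb₂0, hb₂, hb₂t⟩ := ih
        obtain ⟨b₁, n₁, hb₁0, hb₁, hb₁a⟩ := ratio a
        refine ⟨b₁ * b₂, n₁ + n₂, mul_ne_zero hb₁0 hb₂0, mulmem hb₁ hb₂, ?_⟩
        intro u hu
        rcases Finset.mem_insert.mp hu with rfl | hu
        · rw [show b₁ * b₂ * u = (b₁ * u) * b₂ by ring]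
          exact mulmem hb₁a hb₂
        · rw [show b₁ * b₂ * u = b₁ * (b₂ * u) by ring]
          exact mulmem hb₁ (hb₂t u hu)
    obtain ⟨b, n, hb0, hb, hbt⟩ := main t
    refine ⟨b, n, hb0, hb, ?_⟩
    intro u hu
    have hle : span (ZMod p) (t : Set K) ≤
        (M ^ n).comap (LinearMap.mulLeft (ZMod p) b) := by
      refine span_le.mpr ?_
      intro x hx
      simpa [Submodule.mem_comap, LinearMap.mulLeft_apply] using hbt x hx
    simpa [Submodule.mem_comap, LinearMap.mulLeft_apply] using hle hu
  obtain ⟨β, N₁, hβ0, hβM, hβV⟩ := denom V (Module.Finite.iff_fg.mp hV)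
  obtain ⟨φ, N₂, hφ0, hφM, hφC⟩ := denom C hCfg
  set N : ℕ := N₁ + N₂ + 1 with hN
  set n : ℕ := 2 * p * N with hn
  set u : K := β ^ p * φ ^ (p + 1) with hu
  have hu0 : u ≠ 0 := mul_ne_zero (pow_ne_zero _ hβ0) (pow_ne_zero _ hφ0)
  set W : Submodule (ZMod p) K := (M ^ n).comap (LinearMap.mulLeft (ZMod p) u) with hW
  have hWmem : ∀ x : K, x ∈ W ↔ u * x ∈ M ^ n := by
    intro x
    rw [hW, Submodule.mem_comap, LinearMap.mulLeft_apply]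
  -- W is finite dimensional
  have hWfd : FiniteDimensional (ZMod p) W := by
    have hWeq : W = (M ^ n).map (LinearMap.mulLeft (ZMod p) u⁻¹) := by
      ext x
      rw [hWmem, Submodule.mem_map]
      constructor
      · intro hx
        exact ⟨u * x, hx, by rw [LinearMap.mulLeft_apply, inv_mul_cancel_left₀ hu0]⟩
      · rintro ⟨y, hy, rfl⟩
        rw [LinearMap.mulLeft_apply, mul_inv_cancel_left₀ hu0]
        exact hy
    rw [hWeq]
    exact Module.Finite.iff_fg.mpr ((hMfg n).map _)
  have hVW : V ≤ W := by
    intro v hv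
    rw [hWmem]
    have heq : u * v = ((β * v) * β ^ (p - 1)) * φ ^ (p + 1) := by
      rw [hu, show β ^ p = β * β ^ (p - 1) by
        rw [← pow_succ']; congr 1; omega]
      ring
    rw [heq]
    have hmem : ((β * v) * β ^ (p - 1)) * φ ^ (p + 1) ∈
        M ^ ((N₁ + N₁ * (p - 1)) + N₂ * (p + 1)) :=
      mulmem (mulmem (hβV v hv) (powmem β N₁ (p - 1) hβM)) (powmem φ N₂ (p + 1) hφM)
    refine mono ?_ hmem
    rw [hn, hN]
    have h1 : 1 ≤ p := hp0
    zify [h1]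
    nlinarith [mul_nonneg (show (0:ℤ) ≤ (p:ℤ) by positivity) (show (0:ℤ) ≤ (N₁:ℤ) by positivity),
      mul_nonneg (show (0:ℤ) ≤ (p:ℤ) - 1 by omega) (show (0:ℤ) ≤ (N₂:ℤ) by positivity)]
  refine ⟨W, hWfd, hVW, ?_⟩
  intro i x hx
  refine Submodule.mul_induction_on hx ?_ ?_
  · intro v hv w hw
    rw [hWmem] at hw ⊢
    set γ : K := β * φ with hγ
    have hγ2 : γ ^ 2 ≠ 0 := pow_ne_zero _ (mul_ne_zero hβ0 hφ0)
    set q : K := (γ ^ 2)⁻¹ with hq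
    set y : K := (γ ^ 2) ^ p * (v * w) with hy
    have hvw : v * w = q ^ p * y := by
      rw [hy, hq, ← mul_assoc, ← mul_pow, inv_mul_cancel₀ hγ2, one_pow, one_mul]
    -- y expanded
    have hββ : β * β ^ p * β ^ (p - 1) = β ^ (2 * p) := by
      rw [show 2 * p = 1 + p + (p - 1) by omega, pow_add, pow_add, pow_one]
    have hφφ : φ ^ (p + 1) * φ ^ (p - 1) = φ ^ (2 * p) := by
      rw [← pow_add]; congr 1; omega
    have hy_eq : y = ((β * v) * (u * w)) * (β ^ (p - 1) * φ ^ (p - 1)) := by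
      rw [hy, hγ, ← pow_mul, mul_pow, hu, ← hββ, ← hφφ]
      ring
    have hy_mem : y ∈ M ^ (p * (3 * N)) := by
      have : y ∈ M ^ ((N₁ + n) + (N₁ * (p - 1) + N₂ * (p - 1))) := by
        rw [hy_eq]
        exact mulmem (mulmem (hβV v hv) hw)
          (mulmem (powmem β N₁ (p - 1) hβM) (powmem φ N₂ (p - 1) hφM))
      refine mono ?_ this
      rw [hn, hN]
      have h1 : 1 ≤ p := hp0
      zify [h1]
      nlinarith [mul_nonneg (show (0:ℤ) ≤ (p:ℤ) - 1 by omega)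
        (show (0:ℤ) ≤ (N₁:ℤ) + (N₂:ℤ) by positivity)]
    have hπy : π i y ∈ M ^ (3 * N) * C := by
      have := B (p * (3 * N)) i y hy_mem
      rwa [Nat.mul_div_cancel_left _ hp0] at this
    have huq : u * q = β ^ (p - 2) * φ ^ (p - 1) := by
      have hu_eq : u = (β ^ (p - 2) * φ ^ (p - 1)) * γ ^ 2 := by
        rw [hγ, mul_pow, hu]
        rw [show β ^ p = β ^ (p - 2) * β ^ 2 by rw [← pow_add]; congr 1; omega,
          show φ ^ (p + 1) = φ ^ (p - 1) * φ ^ 2 by rw [← pow_add]; congr 1; omega]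
        ring
      rw [hq, hu_eq, mul_inv_cancel_right₀ hγ2]
    have hgoal : u * π i (v * w) = (β ^ (p - 2) * φ ^ (p - 1)) * π i y := by
      rw [hvw, key, ← mul_assoc, huq]
    rw [hgoal]
    -- multiply M^(3N) * C into M^n
    refine Submodule.mul_induction_on hπy ?_ ?_
    · intro mm hmm c hc
      have hsplitφ : φ ^ (p - 1) = φ ^ (p - 2) * φ := by
        rw [← pow_succ]; congr 1; omega
      have heq2 : (β ^ (p - 2) * φ ^ (p - 1)) * (mm * c)
          = ((β ^ (p - 2) * φ ^ (p - 2)) * mm) * (φ * c) := by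
        rw [hsplitφ]; ring
      rw [heq2]
      have hmem : ((β ^ (p - 2) * φ ^ (p - 2)) * mm) * (φ * c) ∈
          M ^ (((N₁ * (p - 2) + N₂ * (p - 2)) + 3 * N) + N₂) :=
        mulmem (mulmem (mulmem (powmem β N₁ (p - 2) hβM) (powmem φ N₂ (p - 2) hφM)) hmm)
          (hφC c hc)
      refine mono ?_ hmem
      rw [hn, hN]
      zify [hp2]
      nlinarith [mul_nonneg (show (0:ℤ) ≤ (p:ℤ) - 1 by omega)
          (show (0:ℤ) ≤ (N₁:ℤ) by positivity),
        mul_nonneg (show (0:ℤ) ≤ (p:ℤ) - 2 by omega)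
          (show (0:ℤ) ≤ (N₂:ℤ) by positivity)]
    · intro z₁ z₂ hz₁ hz₂
      rw [mul_add]
      exact add_mem hz₁ hz₂
  · intro x₁ x₂ hx₁ hx₂
    rw [map_add]
    exact add_mem hx₁ hx₂
end

section
/- Let S ⊆ ℕ and let p ≥ 2. Then the family of sets {(L_i^{p^r})^{-1}(S) : r ∈ ℕ, 0 ≤ i < p^r} is finite if and only if S is p-automatic, where L_i^{k}(n) = kn + i and (L_i^k)^{-1}(S) = {n ∈ ℕ : kn + i ∈ S}. -/
/-- A (deterministic, complete) finite automaton over the digit alphabet `{0,...,p-1}`,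
with states `Fin n`. -/
structure NatAutomaton (p : ℕ) where
  n : ℕ
  start : Fin n
  accept : Fin n → Bool
  step : Fin n → Fin p → Fin n

/-- The state reached after reading a word (list of digits, most significant first). -/
def NatAutomaton.eval {p : ℕ} (M : NatAutomaton p) (w : List (Fin p)) : Fin M.n :=
  w.foldl M.step M.start

/-- The automaton accepts a word. -/
def NatAutomaton.Accepts {p : ℕ} (M : NatAutomaton p) (w : List (Fin p)) : Prop :=
  M.accept (M.eval w) = true

/-- The value `[w]_p` of a word of base-`p` digits, read most significant digit first. -/
def wordVal (p : ℕ) (w : List (Fin p)) : ℕ :=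
  w.foldl (fun acc t => acc * p + t.val) 0

/-- A set `S ⊆ ℕ` is `p`-automatic if some finite automaton accepts exactly the words
`w` (base-`p` digit strings, most significant first) with `[w]_p ∈ S`. -/
def IsPAutomatic (p : ℕ) (S : Set ℕ) : Prop :=
  ∃ M : NatAutomaton p, ∀ w : List (Fin p), M.Accepts w ↔ wordVal p w ∈ S

/-- The `p`-kernel of a set `S ⊆ ℕ`: the family of sets `(L_i^{p^r})⁻¹(S) = {n : p^r n + i ∈ S}`
for `r ∈ ℕ` and `0 ≤ i < p^r`. -/
def pKernel (p : ℕ) (S : Set ℕ) : Set (Set ℕ) :=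
  {T : Set ℕ | ∃ r i : ℕ, i < p ^ r ∧ T = {n : ℕ | p ^ r * n + i ∈ S}}

/-!
Reading the digits of `a` most significant first, the only information about `a` that
matters for the rest of the input is the set of kernel elements containing `a`: a word `u`
of length `r` and value `i` appended to `a` gives `p ^ r * a + i`, and `p ^ r * a + i ∈ S`
says `a ∈ {n | p ^ r * n + i ∈ S}`. Appending one digit `d` replaces a kernel element `T` by
`{n | p * n + d ∈ T}`, again a kernel element, so a finite kernel yields a finite automaton
on these sets of kernel elements. Conversely, for an automaton with state set `σ`, the kernel
element `{n | p ^ r * n + i ∈ S}` is the set of `n` whose representation drives the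
automaton into one of the states from which `u` is accepted; so the kernel has at most
`2 ^ |σ|` elements.
-/

section wordVal

variable {p : ℕ}

theorem wordVal_append_singleton (w : List (Fin p)) (d : Fin p) :
    wordVal p (w ++ [d]) = wordVal p w * p + d := by
  simp [wordVal, List.foldl_append]

theorem wordVal_append (w u : List (Fin p)) :
    wordVal p (w ++ u) = wordVal p w * p ^ u.length + wordVal p u := by
  induction u using List.reverseRecOn with
  | nil => simp [wordVal]
  | append_singleton u d ih =>
    rw [← List.append_assoc, wordVal_append_singleton, ih, wordVal_append_singleton,
      List.length_append, List.length_singleton, pow_succ]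
    ring

theorem exists_length_eq_wordVal_eq_of_lt {r i : ℕ} (hi : i < p ^ r) :
    ∃ u : List (Fin p), u.length = r ∧ wordVal p u = i := by
  induction r generalizing i with
  | zero => exact ⟨[], rfl, by simp_all [wordVal]⟩
  | succ r ih =>
    have hp : 0 < p := Nat.pos_of_ne_zero fun h => by simp [h] at hi
    obtain ⟨u, rfl, hu⟩ := ih (i := i / p) (Nat.div_lt_of_lt_mul (by rwa [← pow_succ']))
    refine ⟨u ++ [⟨i % p, Nat.mod_lt i hp⟩], by simp, ?_⟩
    rw [wordVal_append_singleton, hu, Nat.div_add_mod']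

theorem wordVal_surjective (hp : 1 < p) : Function.Surjective (wordVal p) := fun m =>
  (exists_length_eq_wordVal_eq_of_lt (Nat.lt_pow_self (n := m) hp)).imp fun _ => And.right

end wordVal

def baseLanguage (p : ℕ) (S : Set ℕ) : Language (Fin p) :=
  {w | wordVal p w ∈ S}

@[simp]
theorem mem_baseLanguage {p : ℕ} {S : Set ℕ} {w : List (Fin p)} :
    w ∈ baseLanguage p S ↔ wordVal p w ∈ S :=
  Iff.rfl

theorem isPAutomatic_iff_isRegular {p : ℕ} {S : Set ℕ} :
    IsPAutomatic p S ↔ (baseLanguage p S).IsRegular := by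
  classical
  constructor
  · rintro ⟨M, hM⟩
    exact ⟨Fin M.n, inferInstance, ⟨M.step, M.start, {q | M.accept q}⟩, Set.ext hM⟩
  · rintro ⟨σ, _, M, hM⟩
    let M' := DFA.reindex (Fintype.equivFin σ) M
    refine ⟨⟨_, M'.start, fun q => decide (q ∈ M'.accept), M'.step⟩, fun w => ?_⟩
    change decide (M'.eval w ∈ M'.accept) = true ↔ _
    rw [decide_eq_true_iff, ← DFA.mem_accepts, DFA.accepts_reindex, hM, mem_baseLanguage]

section pKernel

variable {p : ℕ} {S : Set ℕ}

theorem self_mem_pKernel : S ∈ pKernel p S :=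
  ⟨0, 0, by simp, by simp⟩

theorem setOf_mul_add_mem_mem_pKernel {T : Set ℕ} (hT : T ∈ pKernel p S) {d : ℕ} (hd : d < p) :
    {n | p * n + d ∈ T} ∈ pKernel p S := by
  obtain ⟨r, i, hi, rfl⟩ := hT
  refine ⟨r + 1, p ^ r * d + i, ?_, ?_⟩
  · calc p ^ r * d + i < p ^ r * d + p ^ r := by omega
      _ = p ^ r * (d + 1) := by ring
      _ ≤ p ^ (r + 1) := by rw [pow_succ]; gcongr; omega
  · ext n
    simp only [Set.mem_ofPred_eq]
    ring_nf

def kernelProfile (p : ℕ) (S : Set ℕ) (a : ℕ) : Set (pKernel p S) :=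
  {T | a ∈ T.1}

def kernelDFA (p : ℕ) (S : Set ℕ) : DFA (Fin p) (Set (pKernel p S)) where
  step s d := {T | ⟨_, setOf_mul_add_mem_mem_pKernel T.2 d.2⟩ ∈ s}
  start := kernelProfile p S 0
  accept := {s | ⟨S, self_mem_pKernel⟩ ∈ s}

theorem kernelDFA_step_kernelProfile (a : ℕ) (d : Fin p) :
    (kernelDFA p S).step (kernelProfile p S a) d = kernelProfile p S (a * p + d) := by
  ext T
  simp [kernelDFA, kernelProfile, mul_comm]

theorem kernelDFA_eval (w : List (Fin p)) :
    (kernelDFA p S).eval w = kernelProfile p S (wordVal p w) := by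
  induction w using List.reverseRecOn with
  | nil => rfl
  | append_singleton w d ih =>
    rw [DFA.eval_append_singleton, ih, kernelDFA_step_kernelProfile, wordVal_append_singleton]

theorem kernelDFA_accepts : (kernelDFA p S).accepts = baseLanguage p S := by
  ext w
  rw [DFA.mem_accepts, kernelDFA_eval]
  rfl

theorem isRegular_of_pKernel_finite (hK : (pKernel p S).Finite) :
    (baseLanguage p S).IsRegular :=
  have := hK.to_subtype
  ⟨_, Fintype.ofFinite _, kernelDFA p S, kernelDFA_accepts⟩

theorem pKernel_finite_of_isRegular (hp : 1 < p) (hS : (baseLanguage p S).IsRegular) :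
    (pKernel p S).Finite := by
  obtain ⟨σ, _, M, hM⟩ := hS
  obtain ⟨rep, hrep⟩ := (wordVal_surjective hp).hasRightInverse
  refine (Set.finite_range fun A : Set σ => M.eval ∘ rep ⁻¹' A).subset ?_
  rintro _ ⟨r, i, hi, rfl⟩
  obtain ⟨u, rfl, rfl⟩ := exists_length_eq_wordVal_eq_of_lt hi
  refine ⟨{q | M.evalFrom q u ∈ M.accept}, Set.ext fun n => ?_⟩
  calc n ∈ M.eval ∘ rep ⁻¹' {q | M.evalFrom q u ∈ M.accept} ↔ rep n ++ u ∈ M.accepts := by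
        rw [DFA.mem_accepts, DFA.eval, DFA.evalFrom_of_append]; rfl
    _ ↔ p ^ u.length * n + wordVal p u ∈ S := by
        rw [hM, mem_baseLanguage, wordVal_append, hrep, mul_comm]

end pKernel

/-- A set `S ⊆ ℕ` is `p`-automatic if and only if its `p`-kernel
`{(L_i^{p^r})⁻¹(S) : r ∈ ℕ, 0 ≤ i < p^r}` is finite. -/
theorem isPAutomatic_iff_pKernel_finite (p : ℕ) (hp : 2 ≤ p) (S : Set ℕ) :
    (pKernel p S).Finite ↔ IsPAutomatic p S := by
  rw [isPAutomatic_iff_isRegular]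
  exact ⟨isRegular_of_pKernel_finite, pKernel_finite_of_isRegular hp⟩
end

section
/- Let S ⊆ ℕ be a finite p-automatic set with p-kernel of cardinality c. Then every element m of S satisfies m < p^{c-2}. -/
/-!
Let `M = max S` and `R = log_p M`. The kernel sets `T r = {n : p^r n + (M mod p^r) ∈ S}` have
greatest element `M / p^r`, and these values are pairwise distinct for `r ≤ R + 1`: they are
positive and strictly decreasing up to `R`, and `M / p^(R+1) = 0`. Together with `∅`, which is
the kernel set of a residue beyond `M`, this gives `R + 3` distinct elements of the kernel, so
`c ≥ R + 3` and `M < p^(R+1) ≤ p^(c-2)`.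
-/

open Set

lemma setOf_pow_mul_add_mem_pKernel {p r i : ℕ} (S : Set ℕ) (hi : i < p ^ r) :
    {n | p ^ r * n + i ∈ S} ∈ pKernel p S :=
  ⟨r, i, hi, rfl⟩

lemma isGreatest_setOf_mul_add_mod_mem {S : Set ℕ} {M d : ℕ} (hM : IsGreatest S M)
    (hd : 0 < d) :
    IsGreatest {n | d * n + M % d ∈ S} (M / d) := by
  refine ⟨?_, fun n hn => ?_⟩
  · show d * (M / d) + M % d ∈ S
    rw [Nat.div_add_mod]
    exact hM.1
  · have : d * n ≤ M := (Nat.le_add_right _ _).trans (hM.2 hn)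
    exact (Nat.le_div_iff_mul_le hd).2 (by rwa [mul_comm])

lemma Nat.injOn_div_pow_Iic_log_add_one {b M : ℕ} (hb : 1 < b) (hM : M ≠ 0) :
    InjOn (fun r => M / b ^ r) (Iic (Nat.log b M + 1)) := by
  refine (strictAntiOn_Iic_of_succ_lt fun r hr => ?_).injOn
  have hpos : 0 < M / b ^ r := Nat.div_pos
    ((Nat.pow_le_pow_right (by omega) (by omega)).trans (Nat.pow_log_le_self b hM))
    (by positivity)
  simpa only [Order.succ_eq_add_one, pow_succ, ← Nat.div_div_eq_div_mul] using
    Nat.div_lt_self hpos hb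

lemma log_add_three_le_ncard_pKernel {p M : ℕ} {S : Set ℕ} (hp : 1 < p) (hM : IsGreatest S M)
    (hM0 : M ≠ 0) (hfin : (pKernel p S).Finite) :
    Nat.log p M + 3 ≤ (pKernel p S).ncard := by
  classical
  set R := Nat.log p M
  set T : ℕ → Set ℕ := fun r => {n | p ^ r * n + M % p ^ r ∈ S}
  have hT : ∀ r, IsGreatest (T r) (M / p ^ r) := fun r =>
    isGreatest_setOf_mul_add_mod_mem hM (by positivity)
  have hTinj : InjOn T (Iic (R + 1)) := fun r hr r' hr' h =>
    Nat.injOn_div_pow_Iic_log_add_one hp hM0 hr hr' ((hT r).unique (h ▸ hT r'))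
  have hempty : (∅ : Set ℕ) ∈ pKernel p S := by
    have hlt : M + 1 < p ^ (M + 1) := Nat.lt_pow_self hp
    convert setOf_pow_mul_add_mem_pKernel S hlt
    refine (eq_empty_of_forall_notMem fun n hn => ?_).symm
    have := hM.2 hn
    omega
  let F := insert ∅ ((Finset.range (R + 2)).image T)
  have hF : (F : Set (Set ℕ)) ⊆ pKernel p S := by
    simp only [F, Finset.coe_insert, Finset.coe_image, insert_subset_iff, image_subset_iff]
    exact ⟨hempty, fun r _ => setOf_pow_mul_add_mem_pKernel S (Nat.mod_lt _ (by positivity))⟩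
  have hFcard : F.card = R + 3 := by
    rw [Finset.card_insert_of_notMem, Finset.card_image_of_injOn, Finset.card_range]
    · exact fun r hr r' hr' => hTinj
        (Nat.le_of_lt_succ (Finset.mem_range.1 hr)) (Nat.le_of_lt_succ (Finset.mem_range.1 hr'))
    · simp only [Finset.mem_image, not_exists, not_and]
      exact fun r _ h => (hT r).nonempty.ne_empty h
  calc R + 3 = (F : Set (Set ℕ)).ncard := by rw [ncard_coe_finset, hFcard]
    _ ≤ (pKernel p S).ncard := ncard_le_ncard hF hfin

/-- If `S ⊆ ℕ` is a finite `p`-automatic set with `p`-kernel of cardinality `c`, then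
every element `m ∈ S` satisfies `m < p^(c-2)`. -/
theorem mem_lt_of_finite_pKernel_card (p : ℕ) (hp : 2 ≤ p) (S : Set ℕ) (c : ℕ)
    (hSfin : S.Finite) (hfin : (pKernel p S).Finite) (hc : (pKernel p S).ncard = c) :
    ∀ m ∈ S, m < p ^ (c - 2) := by
  intro m hm
  obtain ⟨M, hM⟩ := hSfin.bddAbove.exists_isGreatest_of_nonempty ⟨m, hm⟩
  have hmM : m ≤ M := hM.2 hm
  rcases Nat.eq_zero_or_pos M with hM0 | hM0
  · exact (show m = 0 by omega) ▸ pow_pos (by omega) _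
  have hlog := log_add_three_le_ncard_pKernel hp hM hM0.ne' hfin
  calc m ≤ M := hmM
    _ < p ^ (Nat.log p M + 1) := Nat.lt_pow_succ_log_self hp M
    _ ≤ p ^ (c - 2) := Nat.pow_le_pow_right (by omega) (by omega)
end

section
/- Let K be a field of characteristic p > 0, let q be a power of p, and let γ_1, ..., γ_e ∈ K be elements. If δ_1, ..., δ_e ∈ K are not all zero and Σ_{i=1}^e δ_i γ_i^{q^n} = 0 for all sufficiently large n, then γ_1, ..., γ_e are linearly dependent over 𝔽_q. -/
/-- Let `K` have characteristic `p > 0`, `q = p^e`, and let `F ⊆ K` be the subfield with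
`q` elements. If `γ₁,...,γ_e ∈ K` and there are `δ₁,...,δ_e ∈ K`, not all zero, with
`Σ_i δ_i γ_i^{q^n} = 0` for all sufficiently large `n`, then `γ₁,...,γ_e` are linearly
dependent over `F`. -/
theorem linearDependent_of_eventual_frobenius_relation
    (K : Type) [Field K] (p : ℕ) [Fact p.Prime] [CharP K p]
    (e : ℕ) (he : 0 < e) (q : ℕ) (hq : q = p ^ e)
    (F : Subfield K) [Fintype F] (hF : Fintype.card F = q)
    (m : ℕ) (γ δ : Fin m → K) (hδ : δ ≠ 0)
    (hrel : ∃ N : ℕ, ∀ n ≥ N, ∑ i : Fin m, δ i * γ i ^ q ^ n = 0) :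
    ¬ LinearIndependent F γ := by
  classical
  intro hind
  have hp2 : 2 ≤ p := (Fact.out : p.Prime).two_le
  have hq2 : 2 ≤ q := by
    subst hq
    calc 2 ≤ p := hp2
    _ = p ^ 1 := (pow_one p).symm
    _ ≤ p ^ e := Nat.pow_le_pow_right (by omega) he
  -- Frobenius: x ↦ x ^ q ^ n is additive
  have hpown : ∀ (n : ℕ) (a : Fin m → K),
      (∑ i : Fin m, a i) ^ q ^ n = ∑ i : Fin m, a i ^ q ^ n := by
    intro n a
    have hqe : q ^ n = p ^ (e * n) := by rw [hq, ← pow_mul]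
    rw [hqe]
    exact map_sum (iterateFrobenius K p (e * n)) a Finset.univ
  have hpow1 : ∀ (a : Fin m → K), (∑ i : Fin m, a i) ^ q = ∑ i : Fin m, a i ^ q := by
    intro a
    simpa using hpown 1 a
  -- elements fixed by x ↦ x^q are exactly F
  have hmemF : ∀ x : K, x ^ q = x → ∃ c : F, (c : K) = x := by
    intro x hx
    set P : Polynomial K := Polynomial.X ^ q - Polynomial.X with hP
    have hdeg : P.natDegree = q := by
      rw [hP, Polynomial.natDegree_sub_eq_left_of_natDegree_lt]
      · exact Polynomial.natDegree_X_pow q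
      · simpa [Polynomial.natDegree_X_pow] using by omega
    have hP0 : P ≠ 0 := fun h => by simp [h] at hdeg; omega
    have hTcard : (Finset.image (fun c : F => (c : K)) Finset.univ).card = q := by
      rw [Finset.card_image_of_injective _ Subtype.coe_injective,
        Finset.card_univ, hF]
    have hTsub : (Finset.image (fun c : F => (c : K)) Finset.univ) ⊆ P.roots.toFinset := by
      intro y hy
      rw [Finset.mem_image] at hy
      obtain ⟨c, -, rfl⟩ := hy
      have hc : c ^ q = c := by rw [← hF]; exact FiniteField.pow_card c
      have hck : ((c : K)) ^ q = (c : K) := by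
        rw [← SubmonoidClass.coe_pow, hc]
      rw [Multiset.mem_toFinset, Polynomial.mem_roots hP0]
      simp [hP, Polynomial.IsRoot, hck]
    have hRcard : P.roots.toFinset.card ≤ q := by
      calc P.roots.toFinset.card ≤ Multiset.card P.roots := Multiset.toFinset_card_le _
      _ ≤ P.natDegree := Polynomial.card_roots' P
      _ = q := hdeg
    have hTR : (Finset.image (fun c : F => (c : K)) Finset.univ) = P.roots.toFinset :=
      Finset.eq_of_subset_of_card_le hTsub (hTcard ▸ hRcard)
    have hxR : x ∈ P.roots.toFinset := by
      rw [Multiset.mem_toFinset, Polynomial.mem_roots hP0]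
      simp [hP, Polynomial.IsRoot, hx]
    rw [← hTR, Finset.mem_image] at hxR
    obtain ⟨c, -, hc⟩ := hxR
    exact ⟨c, hc⟩
  -- key claim by strong induction on the size of the support
  have key : ∀ k : ℕ, ∀ δ' : Fin m → K,
      (Finset.univ.filter (fun i => δ' i ≠ 0)).card ≤ k →
      (∃ N : ℕ, ∀ n ≥ N, ∑ i : Fin m, δ' i * γ i ^ q ^ n = 0) → δ' = 0 := by
    intro k
    induction k with
    | zero =>
      intro δ' hcard _
      funext i
      by_contra hi'
      have hi : δ' i ≠ 0 := by simpa using hi'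
      have hmem : i ∈ Finset.univ.filter (fun i => δ' i ≠ 0) := by simp [hi]
      have := Finset.card_pos.mpr ⟨i, hmem⟩
      omega
    | succ k ih =>
      intro δ' hcard hrel'
      obtain ⟨N, hN⟩ := hrel'
      by_cases hz : δ' = 0
      · exact hz
      exfalso
      obtain ⟨i0, hi0'⟩ := Function.ne_iff.mp hz
      have hi0 : δ' i0 ≠ 0 := by simpa using hi0'
      set δ2 : Fin m → K := fun i => δ' i / δ' i0 with hδ2
      have hδ2i0 : δ2 i0 = 1 := div_self hi0
      have hrel2 : ∀ n ≥ N, ∑ i : Fin m, δ2 i * γ i ^ q ^ n = 0 := by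
        intro n hn
        have h := hN n hn
        have heq : ∑ i : Fin m, δ2 i * γ i ^ q ^ n
            = (δ' i0)⁻¹ * ∑ i : Fin m, δ' i * γ i ^ q ^ n := by
          rw [Finset.mul_sum]
          refine Finset.sum_congr rfl fun i _ => ?_
          rw [hδ2]
          field_simp
        rw [heq, h, mul_zero]
      set ε : Fin m → K := fun i => δ2 i ^ q - δ2 i with hε
      have hrelε : ∀ n ≥ N + 1, ∑ i : Fin m, ε i * γ i ^ q ^ n = 0 := by
        intro n hn
        obtain ⟨n', rfl⟩ : ∃ n', n = n' + 1 := ⟨n - 1, by omega⟩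
        have h1 : ∑ i : Fin m, δ2 i ^ q * γ i ^ q ^ (n' + 1) = 0 := by
          have h0 := hrel2 n' (by omega)
          have hh := congrArg (· ^ q) h0
          simp only [zero_pow (by omega : q ≠ 0)] at hh
          rw [hpow1 (fun i => δ2 i * γ i ^ q ^ n')] at hh
          simpa [mul_pow, ← pow_mul, pow_succ] using hh
        have h2 := hrel2 (n' + 1) (by omega)
        calc ∑ i : Fin m, ε i * γ i ^ q ^ (n' + 1)
            = (∑ i : Fin m, δ2 i ^ q * γ i ^ q ^ (n' + 1))
              - ∑ i : Fin m, δ2 i * γ i ^ q ^ (n' + 1) := by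
              rw [← Finset.sum_sub_distrib]
              exact Finset.sum_congr rfl fun i _ => by rw [hε]; ring
          _ = 0 := by rw [h1, h2, sub_zero]
      have hεcard : (Finset.univ.filter (fun i => ε i ≠ 0)).card ≤ k := by
        have hsub : Finset.univ.filter (fun i => ε i ≠ 0)
            ⊆ (Finset.univ.filter (fun i => δ' i ≠ 0)).erase i0 := by
          intro i hi
          simp only [Finset.mem_filter, Finset.mem_univ, true_and] at hi
          rw [Finset.mem_erase]
          constructor
          · rintro rfl
            apply hi
            rw [hε]
            simp [hδ2i0]
          · simp only [Finset.mem_filter, Finset.mem_univ, true_and]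
            intro h0
            apply hi
            rw [hε]
            simp [hδ2, h0, zero_pow (by omega : q ≠ 0)]
        have hmem : i0 ∈ Finset.univ.filter (fun i => δ' i ≠ 0) := by simp [hi0]
        have hle := Finset.card_le_card hsub
        rw [Finset.card_erase_of_mem hmem] at hle
        omega
      have hε0 : ε = 0 := ih ε hεcard ⟨N + 1, hrelε⟩
      have hfix : ∀ i, δ2 i ^ q = δ2 i := by
        intro i
        have hi := congrFun hε0 i
        rw [hε] at hi
        simpa [sub_eq_zero] using hi
      choose g hg using fun i => hmemF (δ2 i) (hfix i)
      have hfixn : ∀ (n : ℕ) (i : Fin m), δ2 i ^ q ^ n = δ2 i := by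
        intro n i
        induction n with
        | zero => simp
        | succ n ihn => rw [pow_succ, pow_mul, ihn, hfix]
      have hrelF : ∑ i : Fin m, δ2 i * γ i = 0 := by
        have h0 := hrel2 N (le_refl N)
        have hpz : (∑ i : Fin m, δ2 i * γ i) ^ q ^ N = 0 := by
          rw [hpown N]
          rw [← h0]
          exact Finset.sum_congr rfl fun i _ => by rw [mul_pow, hfixn N i]
        exact pow_eq_zero_iff (by positivity) |>.mp hpz
      have hall := Fintype.linearIndependent_iff.mp hind g ?_
      · have h1 := hall i0
        have h2 := hg i0
        rw [h1, hδ2i0] at h2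
        simp at h2
      · rw [← hrelF]
        exact Finset.sum_congr rfl fun i _ => by rw [← hg i]; rfl
  obtain ⟨N, hN⟩ := hrel
  exact hδ (key m δ ((Finset.card_filter_le Finset.univ _).trans (by simp)) ⟨N, hN⟩)
end

section
/- Let K be a field of characteristic p > 0, q a power of p, and α_1,...,α_d, β_1,...,β_d ∈ K with the α_i nonzero. Define a(n) = Σ_{i=1}^d β_i α_i^n. If a(q^n) = 0 for all sufficiently large n ∈ ℕ, then a(q^n) = 0 for all n ∈ ℕ. -/
/-!
Only two facts about `x ↦ x ^ q` matter: it is a ring endomorphism `φ` of `K`, hence injective,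
and `a(q ^ n) = ∑ i, β i * φ^[n] (α i)`. For such sums, vanishing at every `n ≥ 1` forces
vanishing at `n = 0`; the theorem follows by descending from `N` one step at a time.

The one-step claim is proved by induction on the number of terms. Given a relation
`∑ j, b j * φ^[n + 1] (γ j) = 0` for all `n`, the combination `t • φ(relation n) - φ t • relation (n + 1)`
with `t = b a` kills the `a`-th term, and is again a relation of the same shape for the family
`φ ∘ γ`. By induction its value at `0` vanishes, which says `b a * φ (∑ j, b j * γ j) = 0`.
-/

section IterateSums

variable {K ι : Type*} [Field K] (φ : K →+* K)

theorem sum_twist_mul_iterate (s : Finset ι) (b γ : ι → K) (t : K) (n : ℕ) :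
    ∑ j ∈ s, (t * φ (b j) - φ t * b j) * φ^[n] (φ (γ j)) =
      t * φ (∑ j ∈ s, b j * φ^[n] (γ j)) - φ t * ∑ j ∈ s, b j * φ^[n + 1] (γ j) := by
  simp only [map_sum, map_mul, Finset.mul_sum, ← Finset.sum_sub_distrib,
    ← Function.iterate_succ_apply, ← Function.iterate_succ_apply']
  refine Finset.sum_congr rfl fun j _ => ?_
  ring

theorem sum_mul_eq_zero_of_sum_mul_iterate_succ_eq_zero (s : Finset ι) {b γ : ι → K}
    (h : ∀ n, ∑ j ∈ s, b j * φ^[n + 1] (γ j) = 0) : ∑ j ∈ s, b j * γ j = 0 := by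
  classical
  induction s using Finset.induction_on generalizing b γ with
  | empty => exact Finset.sum_empty
  | insert a s ha ih =>
    by_cases hb : b a = 0
    · simp only [Finset.sum_insert ha, hb, zero_mul, zero_add] at h ⊢
      exact ih h
    have twist := sum_twist_mul_iterate φ (insert a s) b γ (b a)
    have twist_a : b a * φ (b a) - φ (b a) * b a = 0 := by rw [mul_comm, sub_self]
    have twisted_rel : ∀ n, ∑ j ∈ s, (b a * φ (b j) - φ (b a) * b j) * φ^[n + 1] (φ (γ j)) = 0 :=
      fun n => by
        have := twist (n + 1)
        rwa [h n, h (n + 1), map_zero, mul_zero, mul_zero, sub_zero, Finset.sum_insert ha,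
          twist_a, zero_mul, zero_add] at this
    have := twist 0
    simp only [Function.iterate_zero, id_eq, zero_add] at this
    rw [Finset.sum_insert ha, twist_a, zero_mul, zero_add, ih twisted_rel, h 0, mul_zero, sub_zero,
      eq_comm, mul_eq_zero, map_eq_zero] at this
    exact this.resolve_left hb

theorem sum_mul_iterate_eq_zero_of_eventually (s : Finset ι) {b γ : ι → K} {N : ℕ}
    (h : ∀ n ≥ N, ∑ j ∈ s, b j * φ^[n] (γ j) = 0) (n : ℕ) :
    ∑ j ∈ s, b j * φ^[n] (γ j) = 0 := by
  induction N with
  | zero => exact h n n.zero_le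
  | succ N ih =>
    refine ih fun m hm => ?_
    rcases hm.eq_or_lt with rfl | hm
    · refine sum_mul_eq_zero_of_sum_mul_iterate_succ_eq_zero φ s fun k => ?_
      simpa only [← Function.iterate_add_apply] using h (k + 1 + N) (by omega)
    · exact h m hm

end IterateSums

theorem zero_at_q_powers_of_eventually_general
    (K : Type) [Field K] (p : ℕ) [Fact p.Prime] [CharP K p]
    (e : ℕ) (q : ℕ) (hq : q = p ^ e)
    (d : ℕ) (α β : Fin d → K)
    (hev : ∃ N : ℕ, ∀ n ≥ N, ∑ i : Fin d, β i * α i ^ q ^ n = 0) :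
    ∀ n : ℕ, ∑ i : Fin d, β i * α i ^ q ^ n = 0 := by
  have frobenius_iterate : ∀ (n : ℕ) (x : K), (iterateFrobenius K p e)^[n] x = x ^ q ^ n := by
    intro n x
    rw [← iterateFrobenius_mul_apply, iterateFrobenius_def, pow_mul, hq]
  obtain ⟨N, hN⟩ := hev
  simp only [← frobenius_iterate] at hN ⊢
  exact sum_mul_iterate_eq_zero_of_eventually _ Finset.univ hN

/-- Let `K` have characteristic `p > 0` and `q = p^e`. If `a(n) = Σ_i β_i α_i^n` with all
`α_i ≠ 0` satisfies `a(q^n) = 0` for all sufficiently large `n`, then `a(q^n) = 0` for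
all `n ∈ ℕ`. -/
theorem zero_at_q_powers_of_eventually
    (K : Type) [Field K] (p : ℕ) [Fact p.Prime] [CharP K p]
    (e : ℕ) (he : 0 < e) (q : ℕ) (hq : q = p ^ e)
    (d : ℕ) (α β : Fin d → K) (hα : ∀ i, α i ≠ 0)
    (hev : ∃ N : ℕ, ∀ n ≥ N, ∑ i : Fin d, β i * α i ^ q ^ n = 0) :
    ∀ n : ℕ, ∑ i : Fin d, β i * α i ^ q ^ n = 0 :=
  zero_at_q_powers_of_eventually_general K p e q hq d α β hev
end

section
/- Let q be a rational number with q > 1 and let c_1, ..., c_r be nonzero rational numbers. Then the set A = {(l_1,...,l_r) ∈ ℕ^r : c_1 q^{l_1} + ... + c_r q^{l_r} = 0} is a finite union of rectangular cosets in ℕ^r. -/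
/-- A rectangular coset in `ℕ^r`: a set of the form `e₀ + e₁ℕ + ... + e_sℕ`, where
`e₁,...,e_s` are pairwise orthogonal nonzero idempotent (i.e. `0/1`-valued) vectors. -/
def IsRectangularCoset (r : ℕ) (A : Set (Fin r → ℕ)) : Prop :=
  ∃ (s : ℕ) (e₀ : Fin r → ℕ) (e : Fin s → Fin r → ℕ),
    (∀ j, e j ≠ 0) ∧
    (∀ j x, e j x = 0 ∨ e j x = 1) ∧
    (∀ j j', j ≠ j' → ∀ x, e j x * e j' x = 0) ∧
    A = {v : Fin r → ℕ | ∃ k : Fin s → ℕ, v = fun x => e₀ x + ∑ j : Fin s, k j * e j x}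

/-!
Write `q = A / b` in lowest terms (`A > b ≥ 1`) and clear the denominators of the `c_i`.
If a vanishing sum `∑ m_i q^{l_i}` has no exponent in a window `(W, W + G)` with `G ≥ ∑ |m_i|`,
then the part with exponents `≤ W`, times `b^W`, is an integer of absolute value
`≤ G A^W < A^{W+G}` divisible by `A^{W+G}`, hence zero. By pigeonhole such a window starts
within `#S * G` of the smallest exponent, so by induction every solution splits into vanishing
blocks whose exponents lie within `r * G` of the block minimum. The solutions are thus the union,
over the finitely many vanishing patterns `(π, δ)` with `δ ≤ r * G`, of the rectangular cosets
`δ + {k ∘ π}`.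
-/

open Finset Function

namespace Rat

lemma den_lt_num_of_one_lt {q : ℚ} (hq : 1 < q) : (q.den : ℤ) < q.num := by
  have hden : (0 : ℚ) < q.den := mod_cast q.den_pos
  rw [← q.num_div_den, one_lt_div hden] at hq
  exact_mod_cast hq

lemma pow_mul_den_pow (q : ℚ) {k L : ℕ} (h : k ≤ L) :
    q ^ k * q.den ^ L = ((q.num ^ k * q.den ^ (L - k) : ℤ) : ℚ) := by
  push_cast
  rw [← Rat.mul_den_eq_num, mul_pow, mul_assoc, ← pow_add, Nat.add_sub_of_le h]

end Rat

lemma exists_common_denominator {ι : Type*} [Finite ι] (c : ι → ℚ) :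
    ∃ (d : ℚ) (m : ι → ℤ), d ≠ 0 ∧ ∀ i, (m i : ℚ) = d * c i := by
  obtain ⟨b, hb⟩ := IsLocalization.exist_integer_multiples_of_finite (nonZeroDivisors ℤ) c
  choose m hm using hb
  refine ⟨(b : ℤ), m, mod_cast nonZeroDivisors.coe_ne_zero b, fun i => ?_⟩
  rw [← zsmul_eq_mul, ← hm i]
  rfl

section Gap

variable {ι : Type*}

lemma exists_gap (S : Finset ι) (l : ι → ℕ) (u G : ℕ) :
    ∃ k ≤ #S, ∀ i ∈ S, l i ≤ u + k * G ∨ u + k * G + G ≤ l i := by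
  -- `(l i - u - 1) / G` is the index of the window containing `l i`; one of `#S + 1` is missed
  obtain ⟨k, hk, hkS⟩ := exists_mem_notMem_of_card_lt_card
    (s := S.image fun i => (l i - u - 1) / G) (t := range (#S + 1))
    (by simpa using card_image_le.trans_lt (Nat.lt_succ_self #S))
  refine ⟨k, Nat.lt_succ_iff.mp (mem_range.mp hk), fun i hi => ?_⟩
  by_contra! h
  refine hkS (mem_image.mpr ⟨i, hi, Nat.div_eq_of_lt_le (by omega) ?_⟩)
  rw [add_one_mul]
  omega

theorem sum_filter_le_eq_zero_of_gap {q : ℚ} (hq : 1 < q) (m : ι → ℤ) (S : Finset ι)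
    (l : ι → ℕ) {W G : ℕ} (hG : ∑ i ∈ S, (m i).natAbs ≤ G)
    (hgap : ∀ i ∈ S, l i ≤ W ∨ W + G ≤ l i) (hsum : ∑ i ∈ S, (m i : ℚ) * q ^ l i = 0) :
    ∑ i ∈ S with l i ≤ W, (m i : ℚ) * q ^ l i = 0 := by
  set A := q.num
  set b := q.den
  have hbA : (b : ℤ) < A := Rat.den_lt_num_of_one_lt hq
  have hb : (1 : ℤ) ≤ b := mod_cast q.den_pos
  have hA : (0 : ℤ) ≤ A := by omega
  set L := max W (S.sup l)
  have hlL : ∀ i ∈ S, l i ≤ L := fun i hi => le_max_of_le_right (le_sup hi)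
  set F : ι → ℤ := fun i => m i * (A ^ l i * b ^ (L - l i))
  have hF : ∀ s ⊆ S,
      ((∑ i ∈ s, F i : ℤ) : ℚ) = (∑ i ∈ s, (m i : ℚ) * q ^ l i) * b ^ L := by
    intro s hs
    push_cast [sum_mul, F, mul_assoc]
    refine sum_congr rfl fun i hi => ?_
    rw [Rat.pow_mul_den_pow q (hlL i (hs hi))]
    push_cast
    rfl
  set N : ℤ := ∑ i ∈ S with l i ≤ W, m i * (A ^ l i * b ^ (W - l i))
  have hlow : ∑ i ∈ S with l i ≤ W, F i = b ^ (L - W) * N := by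
    rw [mul_sum]
    refine sum_congr rfl fun i hi => ?_
    have hiW := (mem_filter.1 hi).2
    have hWL : W ≤ L := le_max_left _ _
    simp only [F]
    rw [show L - l i = (L - W) + (W - l i) by omega, pow_add]
    ring
  have hhigh : A ^ (W + G) ∣ ∑ i ∈ S with ¬l i ≤ W, F i := by
    refine dvd_sum fun i hi => ?_
    obtain ⟨hiS, hiW⟩ := mem_filter.1 hi
    have : W + G ≤ l i := (hgap i hiS).resolve_left hiW
    exact ((pow_dvd_pow A this).mul_right _).mul_left _
  have hdvd : A ^ (W + G) ∣ N := by
    have hS : ∑ i ∈ S, F i = 0 := by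
      have := hF S subset_rfl
      rw [hsum, zero_mul] at this
      exact_mod_cast this
    rw [← sum_filter_add_sum_filter_not S (l · ≤ W), hlow] at hS
    refine ((Rat.isCoprime_num_den q).pow (n := L - W)).dvd_of_dvd_mul_left ?_
    rw [eq_neg_of_add_eq_zero_left hS]
    exact hhigh.neg_right
  have hterm : ∀ i ∈ {i ∈ S | l i ≤ W},
      |m i * (A ^ l i * b ^ (W - l i))| ≤ |m i| * A ^ W := by
    intro i hi
    have hiW := (mem_filter.1 hi).2
    rw [abs_mul, abs_of_nonneg (mul_nonneg (pow_nonneg hA _) (pow_nonneg (by omega) _))]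
    refine mul_le_mul_of_nonneg_left ?_ (abs_nonneg _)
    calc A ^ l i * b ^ (W - l i) ≤ A ^ l i * A ^ (W - l i) := by gcongr
      _ = A ^ W := by rw [← pow_add, Nat.add_sub_cancel' hiW]
  have hbound : |N| < A ^ (W + G) := by
    calc |N| ≤ ∑ i ∈ S with l i ≤ W, |m i| * A ^ W :=
          (abs_sum_le_sum_abs _ _).trans (sum_le_sum hterm)
      _ ≤ ∑ i ∈ S, |m i| * A ^ W :=
          sum_le_sum_of_subset_of_nonneg (filter_subset _ _) fun _ _ _ => by positivity
      _ ≤ G * A ^ W := by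
          rw [← sum_mul]
          gcongr
          simpa only [Int.natCast_natAbs, Nat.cast_sum] using (Nat.cast_le (α := ℤ)).2 hG
      _ < 2 ^ G * A ^ W := by gcongr; exact_mod_cast Nat.lt_two_pow_self
      _ ≤ A ^ G * A ^ W := by gcongr; omega
      _ = A ^ (W + G) := by rw [pow_add, mul_comm]
  have hlowQ := hF _ (filter_subset (l · ≤ W) S)
  rw [hlow, Int.eq_zero_of_abs_lt_dvd hdvd hbound, mul_zero, Int.cast_zero] at hlowQ
  exact (mul_eq_zero.1 hlowQ.symm).resolve_right (by positivity)

theorem exists_fiber_sums_eq_zero [DecidableEq ι] {q : ℚ} (hq : 1 < q) (m : ι → ℤ) {G : ℕ}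
    (S : Finset ι) (hG : ∑ i ∈ S, (m i).natAbs ≤ G) (l : ι → ℕ)
    (hsum : ∑ i ∈ S, (m i : ℚ) * q ^ l i = 0) :
    ∃ π : ι → ι, (∀ i ∈ S, l (π i) ≤ l i ∧ l i ≤ l (π i) + #S * G) ∧
      ∀ j, ∑ i ∈ S with π i = j, (m i : ℚ) * q ^ l i = 0 := by
  induction S using Finset.strongInduction with
  | H S ih =>
  rcases S.eq_empty_or_nonempty with rfl | hne
  · exact ⟨id, by simp, by simp⟩
  obtain ⟨j₀, hj₀, hmin⟩ := S.exists_min_image l hne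
  obtain ⟨k, hk, hgap⟩ := exists_gap S l (l j₀) G
  set W := l j₀ + k * G
  have hlow := sum_filter_le_eq_zero_of_gap hq m S l hG hgap hsum
  set S' := S.filter (¬l · ≤ W)
  have hS' : S' ⊂ S := filter_ssubset.2 ⟨j₀, hj₀, by simp [W]⟩
  have hsum' : ∑ i ∈ S', (m i : ℚ) * q ^ l i = 0 := by
    rwa [← sum_filter_add_sum_filter_not S (l · ≤ W), hlow, zero_add] at hsum
  obtain ⟨π', hπ'l, hπ'⟩ := ih S' hS' ((sum_le_sum_of_subset hS'.subset).trans hG) hsum'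
  refine ⟨fun i => if l i ≤ W then j₀ else π' i, fun i hi => ?_, fun j => ?_⟩
  · beta_reduce
    split_ifs with hiW
    · exact ⟨hmin i hi, hiW.trans (Nat.add_le_add_left (Nat.mul_le_mul_right G hk) _)⟩
    · obtain ⟨h₁, h₂⟩ := hπ'l i (mem_filter.2 ⟨hi, hiW⟩)
      have hcard : #S' * G ≤ #S * G := Nat.mul_le_mul_right G (card_le_card hS'.subset)
      exact ⟨h₁, h₂.trans (Nat.add_le_add_left hcard _)⟩
  · rw [← sum_filter_add_sum_filter_not _ (l · ≤ W), filter_filter, filter_filter]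
    have hblock : ∑ i ∈ S with (if l i ≤ W then j₀ else π' i) = j ∧ l i ≤ W,
        (m i : ℚ) * q ^ l i = 0 := by
      by_cases hj : j₀ = j
      · rw [← hlow]
        exact sum_congr (filter_congr fun i _ => by split_ifs <;> simp_all) fun _ _ => rfl
      · exact sum_eq_zero fun i hi => by
          have := (mem_filter.1 hi).2
          split_ifs at this <;> simp_all
    rw [hblock, zero_add, ← hπ' j, filter_filter]
    refine sum_congr (filter_congr fun i _ => ?_) fun _ _ => rfl
    beta_reduce
    split_ifs <;> simp_all

end Gap

section Cosets

/-- The rectangular coset `δ + {k ∘ π}`; its generators are the indicators of the fibres of `π`. -/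
def fiberCoset {ι κ : Type*} (π : ι → κ) (δ : ι → ℕ) : Set (ι → ℕ) :=
  {l | ∃ k : κ → ℕ, ∀ i, l i = δ i + k (π i)}

lemma isRectangularCoset_fiberCoset_of_surjective {r s : ℕ} {π : Fin r → Fin s}
    (hπ : Surjective π) (δ : Fin r → ℕ) : IsRectangularCoset r (fiberCoset π δ) := by
  refine ⟨s, δ, fun j x => if π x = j then 1 else 0, fun j h => ?_, fun j x => ?_,
    fun j j' hjj' x => ?_, ?_⟩
  · obtain ⟨x, rfl⟩ := hπ j
    simpa using congrFun h x
  · beta_reduce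
    split_ifs <;> simp
  · beta_reduce
    split_ifs <;> simp_all
  · ext l
    simp [fiberCoset, funext_iff]

lemma isRectangularCoset_fiberCoset {r : ℕ} {κ : Type*} (π : Fin r → κ) (δ : Fin r → ℕ) :
    IsRectangularCoset r (fiberCoset π δ) := by
  obtain ⟨s, ⟨e⟩⟩ := Finite.exists_equiv_fin (Set.range π)
  set g : Fin s → κ := Subtype.val ∘ e.symm
  have hg : Injective g := Subtype.val_injective.comp e.symm.injective
  have hgπ : ∀ i, g (e (Set.rangeFactorization π i)) = π i := by simp [g]
  convert isRectangularCoset_fiberCoset_of_surjective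
    (e.surjective.comp Set.rangeFactorization_surjective) δ using 1
  ext l
  constructor
  · rintro ⟨k, hk⟩
    exact ⟨k ∘ g, fun i => by simp [hgπ, hk i]⟩
  · rintro ⟨k, hk⟩
    exact ⟨extend g k 0, fun i => by rw [← hgπ, hg.extend_apply]; exact hk i⟩

end Cosets

section FiberSums

variable {ι κ : Type*} [Fintype ι]

lemma sum_mul_pow_eq_zero_of_mem_fiberCoset [Fintype κ] [DecidableEq κ] {R : Type*}
    [CommSemiring R] {c : ι → R} {q : R} {π : ι → κ} {δ : ι → ℕ}
    (h : ∀ j, ∑ i with π i = j, c i * q ^ δ i = 0) {l : ι → ℕ} (hl : l ∈ fiberCoset π δ) :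
    ∑ i, c i * q ^ l i = 0 := by
  obtain ⟨k, hk⟩ := hl
  rw [← sum_fiberwise univ π]
  refine sum_eq_zero fun j _ => ?_
  calc ∑ i with π i = j, c i * q ^ l i = (∑ i with π i = j, c i * q ^ δ i) * q ^ k j := by
        rw [sum_mul]
        refine sum_congr rfl fun i hi => ?_
        rw [hk, (mem_filter.1 hi).2, pow_add, mul_assoc]
    _ = 0 := by rw [h, zero_mul]

theorem exists_bound_mem_fiberCoset [DecidableEq ι] {q : ℚ} (hq : 1 < q) (c : ι → ℚ) :
    ∃ B : ℕ, ∀ l : ι → ℕ, ∑ i, c i * q ^ l i = 0 →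
      ∃ (π : ι → ι) (δ : ι → ℕ), (∀ i, δ i ≤ B) ∧
        (∀ j, ∑ i with π i = j, c i * q ^ δ i = 0) ∧ l ∈ fiberCoset π δ := by
  obtain ⟨d, m, hd, hm⟩ := exists_common_denominator c
  have hscale : ∀ (s : Finset ι) (l : ι → ℕ),
      ∑ i ∈ s, (m i : ℚ) * q ^ l i = d * ∑ i ∈ s, c i * q ^ l i := by
    intro s l
    simp only [hm, mul_sum, mul_assoc]
  refine ⟨Fintype.card ι * ∑ i, (m i).natAbs, fun l hl => ?_⟩
  obtain ⟨π, hπl, hπ⟩ :=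
    exists_fiber_sums_eq_zero hq m univ le_rfl l (by rw [hscale, hl, mul_zero])
  refine ⟨π, fun i => l i - l (π i), fun i => ?_, fun j => ?_, l, fun i => ?_⟩
  · have := hπl i (mem_univ i)
    rw [card_univ] at this
    beta_reduce
    omega
  · have hq0 : q ≠ 0 := by positivity
    have hshift : (∑ i with π i = j, c i * q ^ (l i - l (π i))) * (d * q ^ l j) =
        ∑ i with π i = j, (m i : ℚ) * q ^ l i := by
      rw [hscale, mul_left_comm, sum_mul]
      refine congrArg _ (sum_congr rfl fun i hi => ?_)
      obtain rfl := (mem_filter.1 hi).2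
      rw [mul_assoc, ← pow_add, Nat.sub_add_cancel (hπl i (mem_univ i)).1]
    rw [hπ j] at hshift
    exact (mul_eq_zero.1 hshift).resolve_right (mul_ne_zero hd (pow_ne_zero _ hq0))
  · have := (hπl i (mem_univ i)).1
    beta_reduce
    omega

end FiberSums

theorem solutions_finite_union_rectangular_cosets_general
    (q : ℚ) (hq : 1 < q) (r : ℕ) (c : Fin r → ℚ) :
    ∃ (t : ℕ) (C : Fin t → Set (Fin r → ℕ)),
      (∀ i, IsRectangularCoset r (C i)) ∧
      {l : Fin r → ℕ | ∑ i : Fin r, c i * q ^ l i = 0} = ⋃ i : Fin t, C i := by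
  obtain ⟨B, hB⟩ := exists_bound_mem_fiberCoset hq c
  let P := {p : (Fin r → Fin r) × (Fin r → Fin (B + 1)) //
    ∀ j, ∑ i with p.1 i = j, c i * q ^ (p.2 i : ℕ) = 0}
  let C (p : P) := fiberCoset p.1.1 fun i => (p.1.2 i : ℕ)
  obtain ⟨t, ⟨e⟩⟩ := Finite.exists_equiv_fin P
  refine ⟨t, C ∘ e.symm, fun a => isRectangularCoset_fiberCoset _ _, ?_⟩
  rw [comp_def, e.symm.surjective.iUnion_comp C]
  ext l
  simp only [Set.mem_ofPred_eq, Set.mem_iUnion]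
  refine ⟨fun hl => ?_, fun ⟨p, hl⟩ => sum_mul_pow_eq_zero_of_mem_fiberCoset p.2 hl⟩
  obtain ⟨π, δ, hδB, hδ, hl⟩ := hB l hl
  exact ⟨⟨(π, fun i => ⟨δ i, Nat.lt_succ_of_le (hδB i)⟩), hδ⟩, hl⟩

/-- For `q ∈ ℚ` with `q > 1` and nonzero `c₁,...,c_r ∈ ℚ`, the solution set
`{(l₁,...,l_r) ∈ ℕ^r : c₁ q^{l₁} + ... + c_r q^{l_r} = 0}` is a finite union of
rectangular cosets in `ℕ^r`. -/
theorem solutions_finite_union_rectangular_cosets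
    (q : ℚ) (hq : 1 < q) (r : ℕ) (c : Fin r → ℚ) (hc : ∀ i, c i ≠ 0) :
    ∃ (t : ℕ) (C : Fin t → Set (Fin r → ℕ)),
      (∀ i, IsRectangularCoset r (C i)) ∧
      {l : Fin r → ℕ | ∑ i : Fin r, c i * q ^ l i = 0} = ⋃ i : Fin t, C i :=
  solutions_finite_union_rectangular_cosets_general q hq r c
end

section
/- Let K be a field of characteristic p > 0 and let a : ℕ → K be given by a(n) = Σ_{i=1}^d β_i α_i^n where α_1, ..., α_d ∈ K are nonzero, no quotient α_i/α_j (i ≠ j) is a root of unity, and the β_i ∈ K. Let r ∈ ℕ and j ≠ k be nonnegative integers. Then there exist sequences b, c : ℕ → K, each of the form n ↦ Σ_{i=1}^d β'_i (α_i^{p^r})^n with at most d-1 nonzero coefficients β'_i, such that {n : a(p^r n + j) = 0} ∩ {n : a(p^r n + k) = 0} = {n : b(n) = 0} ∩ {n : c(n) = 0}. -/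
/-- Let `a(n) = Σ_{i=1}^d β_i α_i^n` be a simple nondegenerate sequence in a field of
characteristic `p > 0` (all `α_i ≠ 0`, no quotient `α_i/α_j`, `i ≠ j`, a root of unity),
with `d ≥ 2`. For `r ∈ ℕ` and `j ≠ k`, there are sequences `b, c` of the form
`n ↦ Σ_i β'_i (α_i^{p^r})^n` with at most `d - 1` nonzero coefficients such that
`Z(T^{p^r}_j a) ∩ Z(T^{p^r}_k a) = Z(b) ∩ Z(c)`. -/

theorem intersection_of_shifted_zero_sets
    (K : Type) [Field K] (p : ℕ) [Fact p.Prime] [CharP K p]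
    (d : ℕ) (hd : 2 ≤ d) (α β : Fin d → K)
    (hα : ∀ i, α i ≠ 0)
    (hnd : ∀ i j : Fin d, i ≠ j → ∀ n : ℕ, 0 < n → (α i / α j) ^ n ≠ 1)
    (r j k : ℕ) (hjk : j ≠ k) :
    ∃ β' β'' : Fin d → K,
      {i : Fin d | β' i ≠ 0}.ncard ≤ d - 1 ∧
      {i : Fin d | β'' i ≠ 0}.ncard ≤ d - 1 ∧
      {n : ℕ | ∑ i : Fin d, β i * α i ^ (p ^ r * n + j) = 0} ∩
          {n : ℕ | ∑ i : Fin d, β i * α i ^ (p ^ r * n + k) = 0} =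
        {n : ℕ | ∑ i : Fin d, β' i * (α i ^ p ^ r) ^ n = 0} ∩
          {n : ℕ | ∑ i : Fin d, β'' i * (α i ^ p ^ r) ^ n = 0} := by
  set i0 : Fin d := ⟨0, by omega⟩ with hi0
  set i1 : Fin d := ⟨1, by omega⟩ with hi1
  have hne : i0 ≠ i1 := by simp [hi0, hi1, Fin.ext_iff]
  have hdet : α i0 ^ k * α i1 ^ j - α i0 ^ j * α i1 ^ k ≠ 0 := by
    intro h
    have h' : α i0 ^ k * α i1 ^ j = α i0 ^ j * α i1 ^ k := sub_eq_zero.mp h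
    rcases Nat.lt_or_ge j k with hlt | hge
    · have hm : k = j + (k - j) := by omega
      apply hnd i0 i1 hne (k - j) (by omega)
      rw [div_pow, div_eq_one_iff_eq (pow_ne_zero _ (hα i1))]
      rw [hm, pow_add, pow_add] at h'
      have h2 : α i0 ^ j * α i1 ^ j * α i0 ^ (k - j)
          = α i0 ^ j * α i1 ^ j * α i1 ^ (k - j) := by linear_combination h'
      exact mul_left_cancel₀
        (mul_ne_zero (pow_ne_zero _ (hα i0)) (pow_ne_zero _ (hα i1))) h2
    · have hm : j = k + (j - k) := by omega
      apply hnd i1 i0 (Ne.symm hne) (j - k) (by omega)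
      rw [div_pow, div_eq_one_iff_eq (pow_ne_zero _ (hα i0))]
      rw [hm, pow_add, pow_add] at h'
      have h2 : α i0 ^ k * α i1 ^ k * α i1 ^ (j - k)
          = α i0 ^ k * α i1 ^ k * α i0 ^ (j - k) := by linear_combination h'
      exact mul_left_cancel₀
        (mul_ne_zero (pow_ne_zero _ (hα i0)) (pow_ne_zero _ (hα i1))) h2
  refine ⟨fun i => β i * (α i ^ j * α i0 ^ k - α i ^ k * α i0 ^ j),
    fun i => β i * (α i ^ j * α i1 ^ k - α i ^ k * α i1 ^ j), ?_, ?_, ?_⟩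
  · apply le_trans (Set.ncard_le_ncard (t := {i0}ᶜ) ?_ (Set.toFinite _))
    · simp [Set.ncard_eq_toFinset_card', Set.toFinset_compl, Finset.card_compl]
    · intro i hi
      simp only [Set.mem_setOf_eq] at hi
      simp only [Set.mem_compl_iff, Set.mem_singleton_iff]
      intro h; apply hi; rw [h]; ring
  · apply le_trans (Set.ncard_le_ncard (t := {i1}ᶜ) ?_ (Set.toFinite _))
    · simp [Set.ncard_eq_toFinset_card', Set.toFinset_compl, Finset.card_compl]
    · intro i hi
      simp only [Set.mem_setOf_eq] at hi
      simp only [Set.mem_compl_iff, Set.mem_singleton_iff]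
      intro h; apply hi; rw [h]; ring
  · have key : ∀ (m : Fin d) (n : ℕ),
        ∑ i : Fin d, (β i * (α i ^ j * α m ^ k - α i ^ k * α m ^ j)) * (α i ^ p ^ r) ^ n
          = α m ^ k * (∑ i : Fin d, β i * α i ^ (p ^ r * n + j))
            - α m ^ j * (∑ i : Fin d, β i * α i ^ (p ^ r * n + k)) := by
      intro m n
      rw [Finset.mul_sum, Finset.mul_sum, ← Finset.sum_sub_distrib]
      refine Finset.sum_congr rfl fun i _ => ?_
      rw [pow_add, pow_add, pow_mul]
      ring
    ext n
    simp only [Set.mem_inter_iff, Set.mem_setOf_eq, key]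
    constructor
    · rintro ⟨h1, h2⟩
      rw [h1, h2]
      constructor <;> ring
    · rintro ⟨h1, h2⟩
      have hU : (α i0 ^ k * α i1 ^ j - α i0 ^ j * α i1 ^ k)
          * (∑ i : Fin d, β i * α i ^ (p ^ r * n + j)) = 0 := by
        linear_combination α i1 ^ j * h1 - α i0 ^ j * h2
      have hV : (α i0 ^ k * α i1 ^ j - α i0 ^ j * α i1 ^ k)
          * (∑ i : Fin d, β i * α i ^ (p ^ r * n + k)) = 0 := by
        linear_combination α i1 ^ k * h1 - α i0 ^ k * h2
      exact ⟨(mul_eq_zero.mp hU).resolve_left hdet,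
        (mul_eq_zero.mp hV).resolve_left hdet⟩
end
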